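/- arXiv:2405.02107 — 7 statements merged into one kernel-verified Lean document; each statement's English description precedes it below -/
import Mathlib

section
/- Let G be a multiset of vectors in F_2^k and R a multiset of nonzero vectors in F_2^k (requests). If R can be served from G by pairwise disjoint recovery sets (each recovery set a sub-multiset of G whose elements sum to the corresponding request), then 2|R| ≤ |G| − N_G(0) + |G ∩ R|, where N_G(0) is the multiplicity of the zero vector in G and |G ∩ R| = Σ_e min(N_G(e), N_R(e)). -/
/-!
Removing the zeros from every recovery set keeps its sum and moves the service into the nonzero
part of `G`, which has `|G| - N_G(0)` elements. A nonzero request is then served either by a single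
column equal to it or by at least two columns. The requests of the first kind use pairwise distinct
copies of elements lying in both `G` and `R`, so there are at most `|G ∩ R|` of them, and counting
columns gives `2|R| ≤ |G| - N_G(0) + |G ∩ R|`.
-/

open Finset

namespace Multiset

variable {α ι : Type*}

lemma filter_finset_sum (p : α → Prop) [DecidablePred p] (s : Finset ι) (f : ι → Multiset α) :
    (∑ i ∈ s, f i).filter p = ∑ i ∈ s, (f i).filter p :=
  map_sum (⟨⟨filter p, filter_zero p⟩, filter_add p⟩ : Multiset α →+ Multiset α) f s

lemma card_filter_ne_add_count [DecidableEq α] (s : Multiset α) (a : α) :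
    card (s.filter (· ≠ a)) + s.count a = card s := by
  conv_rhs => rw [← filter_add_not (· ≠ a) s]
  simp only [ne_eq, not_not, filter_eq', card_add, card_replicate]

lemma sum_filter_ne_zero [AddCommMonoid α] [DecidableEq α] (s : Multiset α) :
    (s.filter (· ≠ 0)).sum = s.sum := by
  conv_rhs => rw [← filter_add_not (· ≠ 0) s]
  rw [sum_add, sum_eq_zero fun x hx => not_not.1 (mem_filter.1 hx).2, add_zero]

lemma two_le_card_of_sum_ne_zero [AddCommMonoid α] {s : Multiset α} (hs : s.sum ≠ 0)
    (h : s ≠ {s.sum}) : 2 ≤ card s := by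
  by_contra! hcard
  interval_cases hc : card s
  · exact hs (by rw [card_eq_zero.1 hc, sum_zero])
  · obtain ⟨a, rfl⟩ := card_eq_one.1 hc
    exact h (by rw [sum_singleton])

end Multiset

section Service

open Multiset

variable {α ι : Type*} [DecidableEq α] [Fintype ι]
  {G : Multiset α} {R : ι → α} {S : ι → Multiset α}

lemma card_filter_eq_singleton_le_card_inter (hSG : ∑ i, S i ≤ G) :
    #{i | S i = {R i}} ≤ card (G ∩ univ.val.map R) := by
  set A := univ.filter fun i => S i = {R i}
  have hA : A.val.map R = ∑ i ∈ A, S i := by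
    rw [← sum_map_singleton (A.val.map R), Multiset.map_map, Finset.sum_map_val]
    exact Finset.sum_congr rfl fun i hi => ((Finset.mem_filter.1 hi).2).symm
  have hle : A.val.map R ≤ G ∩ univ.val.map R :=
    le_inter (hA ▸ (Finset.sum_le_sum_of_subset (subset_univ A)).trans hSG)
      (map_le_map (val_le_iff.2 (subset_univ A)))
  simpa using card_le_card hle

theorem two_mul_card_le_card_add_card_inter [AddCommMonoid α] (hR : ∀ i, R i ≠ 0)
    (hSG : ∑ i, S i ≤ G) (hS : ∀ i, (S i).sum = R i) :
    2 * Fintype.card ι ≤ card G + card (G ∩ univ.val.map R) := by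
  have hserved (i : ι) : 2 ≤ card (S i) + if S i = {R i} then 1 else 0 := by
    split_ifs with h
    · simp [h]
    · have := two_le_card_of_sum_ne_zero ((hS i).symm ▸ hR i) ((hS i).symm ▸ h)
      omega
  calc 2 * Fintype.card ι = ∑ _i : ι, 2 := by simp [mul_comm]
    _ ≤ ∑ i, (card (S i) + if S i = {R i} then 1 else 0) := sum_le_sum fun i _ => hserved i
    _ = card (∑ i, S i) + #{i | S i = {R i}} := by rw [sum_add_distrib, card_sum, card_filter]
    _ ≤ card G + card (G ∩ univ.val.map R) :=
      add_le_add (card_le_card hSG) (card_filter_eq_singleton_le_card_inter hSG)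

end Service

/-- if a sequence `R` of `v` nonzero requests can be served from the
multiset `G` by pairwise disjoint recovery sets, then
`2|R| ≤ |G| − N_G(0) + |G ∩ R|`, stated additively to avoid truncated
subtraction: `2·v + N_G(0) ≤ |G| + |G ∩ R|`. -/
theorem serve_count_upper_bound (k v : ℕ) (G : Multiset (Fin k → ZMod 2))
    (R : Fin v → (Fin k → ZMod 2)) (hR : ∀ i, R i ≠ 0)
    (hserve : ∃ S : Fin v → Multiset (Fin k → ZMod 2),
      (∑ i, S i) ≤ G ∧ ∀ i, (S i).sum = R i) :
    2 * v + G.count 0 ≤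
      Multiset.card G + Multiset.card (G ∩ (↑(List.ofFn R) : Multiset (Fin k → ZMod 2))) := by
  obtain ⟨S, hSG, hS⟩ := hserve
  have hbound := two_mul_card_le_card_add_card_inter (G := G.filter (· ≠ 0))
    (S := fun i => (S i).filter (· ≠ 0)) hR
    (by rw [← Multiset.filter_finset_sum]; exact Multiset.filter_le_filter _ hSG)
    fun i => (Multiset.sum_filter_ne_zero _).trans (hS i)
  rw [Fintype.card_fin, Fin.univ_val_map] at hbound
  have hinter : Multiset.card (G.filter (· ≠ 0) ∩ ↑(List.ofFn R)) ≤
      Multiset.card (G ∩ ↑(List.ofFn R)) :=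
    Multiset.card_le_card (Multiset.le_inter
      (Multiset.inter_le_left.trans (Multiset.filter_le _ G)) Multiset.inter_le_right)
  have hcount := Multiset.card_filter_ne_add_count G 0
  omega
end

section
/- Fix a nonzero r in F_2^k and a multiset G of vectors from F_2^k. The maximum number of pairwise disjoint recovery sets for r of size at most 2 inside G equals N_G(r) + (1/2)·Σ_{e ∈ F_2^k \ {0, r}} min(N_G(e), N_G(r − e)), where N_G(e) is the multiplicity of e in G. -/
/-!
A recovery set of size at most 2 for `r ≠ 0` is either `{r}` or a pair `{e, r - e}` with
`e ∉ {0, r}`. Disjoint singletons use up copies of `r`, so there are at most `N_G(r)` of them.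
If `Q` is the union of the disjoint pairs, then `N_Q(e) = N_Q(r - e)`, so
`N_Q(e) ≤ min (N_G(e), N_G(r - e))`; summing over `e ∉ {0, r}` gives
`2 · #pairs ≤ ∑ min (N_G(e), N_G(r - e))`.

Conversely, in characteristic 2 the map `e ↦ r - e` is a fixed-point-free involution of
`F_2^k \ {0, r}`, so the sum is twice the sum over one representative `e` of each orbit, and
taking `min (N_G(e), N_G(r - e))` copies of `{e, r - e}` for each representative, together with
`N_G(r)` copies of `{r}`, attains the bound.
-/

open Finset Multiset

theorem Finset.sum_eq_sum_filter_lt_of_involution {α M : Type*} [LinearOrder α]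
    [AddCommMonoid M] (s : Finset α) (σ : α → α) (hσ : ∀ a ∈ s, σ a ∈ s)
    (hσσ : ∀ a ∈ s, σ (σ a) = a) (hfix : ∀ a ∈ s, σ a ≠ a) (f : α → M) :
    ∑ a ∈ s, f a = ∑ a ∈ s.filter (fun a => a < σ a), (f a + f (σ a)) := by
  rw [← sum_filter_add_sum_filter_not s (fun a => a < σ a), sum_add_distrib]
  congr 1
  refine sum_nbij' σ σ (fun a ha => ?_) (fun a ha => ?_) (fun a ha => hσσ a (mem_filter.1 ha).1)
    (fun a ha => hσσ a (mem_filter.1 ha).1) fun a ha => by rw [hσσ a (mem_filter.1 ha).1]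
  · simp only [mem_filter, not_lt] at ha ⊢
    exact ⟨hσ a ha.1, by rw [hσσ a ha.1]; exact lt_of_le_of_ne ha.2 (hfix a ha.1)⟩
  · simp only [mem_filter, not_lt] at ha ⊢
    exact ⟨hσ a ha.1, by rw [hσσ a ha.1]; exact ha.2.le⟩

theorem Multiset.exists_fin_map_univ_iff {α : Type*} (p : Multiset α → Prop) (t : ℕ) :
    (∃ S : Fin t → α, p (univ.val.map S)) ↔ ∃ T : Multiset α, card T = t ∧ p T := by
  constructor
  · rintro ⟨S, hS⟩
    exact ⟨_, by simp, hS⟩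
  · rintro ⟨T, rfl, hT⟩
    induction T using Quotient.inductionOn with
    | h l =>
    rw [quot_mk_to_coe, coe_card]
    exact ⟨l.get, by rwa [Fin.univ_val_map, List.ofFn_get]⟩

theorem Multiset.sum_nsmul_singleton_le {α : Type*} [DecidableEq α] {s : Finset α}
    {n : α → ℕ} {G : Multiset α} (h : ∀ a ∈ s, n a ≤ G.count a) : ∑ a ∈ s, n a • {a} ≤ G := by
  rw [le_iff_count]
  intro b
  simp only [count_sum', count_nsmul, count_singleton, mul_ite, mul_one, mul_zero, sum_ite_eq]
  split_ifs with hb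
  · exact h b hb
  · exact Nat.zero_le _

section

variable {V : Type*} [AddCommGroup V] {r : V}

def IsSmallRecoverySet (r : V) (X : Multiset V) : Prop :=
  card X ≤ 2 ∧ (0 : V) ∉ X ∧ X.sum = r

theorem isSmallRecoverySet_iff (hr : r ≠ 0) {X : Multiset V} :
    IsSmallRecoverySet r X ↔ X = {r} ∨ ∃ e, e ≠ 0 ∧ e ≠ r ∧ X = {e, r - e} := by
  constructor
  · rintro ⟨hcard, h0, hsum⟩
    interval_cases h : card X
    · rw [Multiset.card_eq_zero] at h
      subst h
      exact absurd hsum.symm (by simpa using hr)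
    · obtain ⟨a, rfl⟩ := card_eq_one.1 h
      left
      rw [← hsum, Multiset.sum_singleton]
    · obtain ⟨a, b, rfl⟩ := card_eq_two.1 h
      have hb : b = r - a := by rw [← hsum]; simp
      right
      refine ⟨a, fun ha => h0 (by simp [ha]), fun ha => h0 (by simp [hb, ha]), by rw [hb]⟩
  · rintro (rfl | ⟨e, he0, her, rfl⟩)
    · exact ⟨by simp, by simpa using hr.symm, Multiset.sum_singleton r⟩
    · refine ⟨by simp, ?_, by simp⟩
      simp [he0.symm, (sub_ne_zero.2 her.symm).symm]

variable [DecidableEq V]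

theorem count_sub_pair (a e : V) : count (r - a) {e, r - e} = count a {e, r - e} := by
  have h : r - a = e ↔ a = r - e := by rw [sub_eq_iff_eq_add', eq_sub_iff_add_eq, eq_comm]
  simp only [insert_eq_cons, count_cons, count_singleton, sub_right_inj, h]
  omega

theorem count_sub_sum_of_forall_pair {T : Multiset (Multiset V)}
    (hT : ∀ X ∈ T, ∃ e, X = {e, r - e}) (a : V) : count (r - a) T.sum = count a T.sum := by
  induction T using Multiset.induction_on with
  | empty => simp
  | cons X T ih =>
    obtain ⟨e, rfl⟩ := hT X (mem_cons_self X T)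
    simp only [Multiset.sum_cons, count_add, count_sub_pair,
      ih fun Y hY => hT Y (mem_cons_of_mem hY)]

variable [Fintype V]

theorem two_mul_card_le_sum_min {G : Multiset V} {Q : Multiset (Multiset V)} (hle : Q.sum ≤ G)
    (hQ : ∀ X ∈ Q, ∃ e, e ≠ 0 ∧ e ≠ r ∧ X = {e, r - e}) :
    2 * card Q ≤ ∑ e ∈ {0, r}ᶜ, min (G.count e) (G.count (r - e)) := by
  have hcard : card Q.sum = 2 * card Q := by
    rw [← join, card_join, map_congr rfl fun X hX => ?_, map_const', sum_replicate, smul_eq_mul,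
      mul_comm]
    obtain ⟨e, -, -, rfl⟩ := hQ X hX
    rfl
  have hsupp : ∀ a ∈ Q.sum, a ∈ ({0, r}ᶜ : Finset V) := by
    intro a ha
    obtain ⟨X, hX, haX⟩ := mem_join.1 ha
    obtain ⟨e, he0, her, rfl⟩ := hQ X hX
    simp only [insert_eq_cons, Multiset.mem_cons, Multiset.mem_singleton] at haX
    rcases haX with rfl | rfl <;> simp [he0, her, sub_eq_zero, her.symm]
  have hsymm := count_sub_sum_of_forall_pair fun X hX => (hQ X hX).imp fun _ h => h.2.2
  calc 2 * card Q = ∑ e ∈ {0, r}ᶜ, count e Q.sum := by rw [sum_count_eq_card hsupp, hcard]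
    _ ≤ _ := sum_le_sum fun e _ =>
      le_min (count_le_of_le e hle) (hsymm e ▸ count_le_of_le (r - e) hle)

theorem card_le_of_forall_isSmallRecoverySet (hr : r ≠ 0) {G : Multiset V}
    {T : Multiset (Multiset V)} (hle : T.sum ≤ G) (hT : ∀ X ∈ T, IsSmallRecoverySet r X) :
    card T ≤ G.count r + (∑ e ∈ {0, r}ᶜ, min (G.count e) (G.count (r - e))) / 2 := by
  set Q := T.filter (· ≠ {r})
  have hsplit : replicate (T.count {r}) {r} + Q = T := by
    rw [← Multiset.filter_eq', filter_add_not]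
  have hQ : ∀ X ∈ Q, ∃ e, e ≠ 0 ∧ e ≠ r ∧ X = {e, r - e} := by
    intro X hX
    obtain ⟨hXT, hXr⟩ := mem_filter.1 hX
    exact ((isSmallRecoverySet_iff hr).1 (hT X hXT)).resolve_left hXr
  rw [← hsplit, Multiset.sum_add, sum_replicate] at hle
  have hsingletons : T.count {r} ≤ G.count r := by
    simpa using count_le_of_le r (le_of_add_le_left hle)
  have hpairs := two_mul_card_le_sum_min (le_of_add_le_right hle) hQ
  calc card T = T.count {r} + card Q := by
        rw [← card_replicate (T.count {r}) ({r} : Multiset V), ← card_add, hsplit]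
    _ ≤ _ := add_le_add hsingletons ((Nat.le_div_iff_mul_le two_pos).2 (by linarith))

theorem nsmul_singleton_add_sum_min_le (G : Multiset V) :
    G.count r • {r} + ∑ e ∈ {0, r}ᶜ, min (G.count e) (G.count (r - e)) • {e} ≤ G := by
  set m : V → ℕ := fun e => min (G.count e) (G.count (r - e))
  have hrP : r ∉ ({0, r}ᶜ : Finset V) := by simp
  convert sum_nsmul_singleton_le (s := insert r {0, r}ᶜ) (n := Function.update m r (G.count r))
    fun e he => ?_ using 1
  · rw [sum_insert hrP, Function.update_self]
    refine congrArg _ (sum_congr rfl fun e he => ?_)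
    rw [Function.update_of_ne (ne_of_mem_of_not_mem he hrP)]
  · rcases eq_or_ne e r with rfl | her
    · simp
    · simp [Function.update_of_ne her, m]

theorem exists_forall_isSmallRecoverySet_card_eq (hr : ∀ e : V, e + e ≠ r) (G : Multiset V) :
    ∃ T : Multiset (Multiset V),
      card T = G.count r + (∑ e ∈ {0, r}ᶜ, min (G.count e) (G.count (r - e))) / 2 ∧
      T.sum ≤ G ∧ ∀ X ∈ T, IsSmallRecoverySet r X := by
  have hr0 : r ≠ 0 := fun h => hr 0 (by rw [add_zero, h])
  set m : V → ℕ := fun e => min (G.count e) (G.count (r - e))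
  have hm : ∀ e, m (r - e) = m e := fun e => by simp only [m, sub_sub_cancel, min_comm]
  have hσ : ∀ e ∈ ({0, r}ᶜ : Finset V), r - e ∈ ({0, r}ᶜ : Finset V) := fun e he => by
    simp only [mem_compl, Finset.mem_insert, Finset.mem_singleton, not_or] at he ⊢
    exact ⟨sub_ne_zero.2 (Ne.symm he.2), fun h => he.1 (sub_eq_self.1 h)⟩
  have hfix : ∀ e ∈ ({0, r}ᶜ : Finset V), r - e ≠ e :=
    fun e _ h => hr e (sub_eq_iff_eq_add.1 h).symm
  have hinv : ∀ e ∈ ({0, r}ᶜ : Finset V), r - (r - e) = e := fun e _ => sub_sub_cancel r e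
  -- An arbitrary linear order on `V` selects one element `e < r - e` of each pair `{e, r - e}`.
  let : LinearOrder V := WellOrderingRel.isWellOrder.linearOrder
  set t := ({0, r}ᶜ : Finset V).filter fun e => e < r - e
  have hts : t ⊆ {0, r}ᶜ := Finset.filter_subset _ _
  refine ⟨replicate (G.count r) {r} + ∑ e ∈ t, replicate (m e) {e, r - e}, ?_, ?_, ?_⟩
  · rw [card_add, card_replicate, card_sum,
      sum_eq_sum_filter_lt_of_involution _ (r - ·) hσ hinv hfix m]
    simp_rw [card_replicate, hm, ← two_mul]
    rw [← mul_sum, Nat.mul_div_cancel_left _ two_pos]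
  · convert nsmul_singleton_add_sum_min_le G using 2
    rw [sum_eq_sum_filter_lt_of_involution _ (r - ·) hσ hinv hfix
        fun e => m e • ({e} : Multiset V),
      Multiset.sum_add, sum_replicate, ← Multiset.coe_sumAddMonoidHom, map_sum]
    refine congrArg _ (sum_congr rfl fun e _ => ?_)
    rw [Multiset.coe_sumAddMonoidHom, sum_replicate, hm, insert_eq_cons, ← singleton_add,
      smul_add]
  · intro X hX
    rw [isSmallRecoverySet_iff hr0]
    rcases mem_add.1 hX with hX | hX
    · exact Or.inl (eq_of_mem_replicate hX)
    · obtain ⟨e, he, hXe⟩ := Multiset.mem_sum.1 hX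
      have he' := hts he
      simp only [mem_compl, Finset.mem_insert, Finset.mem_singleton, not_or] at he'
      exact Or.inr ⟨e, he'.1, he'.2, eq_of_mem_replicate hXe⟩

end

/-- for nonzero `r` and a multiset `G` of vectors of `F_2^k`,
the maximum number of pairwise disjoint recovery sets for `r` of size at most 2
(made of nonzero columns of `G`) equals
`N_G(r) + (1/2)·∑_{e ≠ 0, r} min(N_G(e), N_G(r − e))`. -/
theorem max_disjoint_small_recovery_sets (k : ℕ) (r : Fin k → ZMod 2) (hr : r ≠ 0)
    (G : Multiset (Fin k → ZMod 2)) :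
    IsGreatest
      {t : ℕ | ∃ S : Fin t → Multiset (Fin k → ZMod 2),
        (∑ i, S i) ≤ G ∧
        ∀ i, Multiset.card (S i) ≤ 2 ∧ (0 : Fin k → ZMod 2) ∉ S i ∧ (S i).sum = r}
      (G.count r +
        (∑ e ∈ Finset.univ.filter (fun e : Fin k → ZMod 2 => e ≠ 0 ∧ e ≠ r),
          min (G.count e) (G.count (r - e))) / 2) := by
  have hdouble : ∀ e : Fin k → ZMod 2, e + e ≠ r := fun e h =>
    hr (h ▸ funext fun j => CharTwo.add_self_eq_zero (e j))
  have hfamily : ∀ t, (∃ S : Fin t → Multiset (Fin k → ZMod 2),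
      (∑ i, S i) ≤ G ∧ ∀ i, IsSmallRecoverySet r (S i)) ↔
      ∃ T, Multiset.card T = t ∧ T.sum ≤ G ∧ ∀ X ∈ T, IsSmallRecoverySet r X := fun t => by
    rw [← exists_fin_map_univ_iff]
    simp [Finset.sum_eq_multiset_sum]
  rw [show univ.filter (fun e : Fin k → ZMod 2 => e ≠ 0 ∧ e ≠ r) = {0, r}ᶜ by ext; simp]
  refine ⟨(hfamily _).2 (exists_forall_isSmallRecoverySet_card_eq hdouble G),
    fun t hS => ?_⟩
  obtain ⟨T, rfl, hle, hT⟩ := (hfamily t).1 hS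
  exact card_le_of_forall_isSmallRecoverySet hr hle hT
end

section
/- Fix a nonzero r ∈ F_2^k and a finite multiset G of vectors from F_2^k. Let t(G) denote the maximum number of pairwise disjoint recovery sets for r in G. Then greedily taking all recovery sets of size at most 2 is optimal: t(G) = t≤2(G) + t(G'), where t≤2(G) is the number of disjoint recovery sets of size at most 2 in G (which equals N_G(r) + (1/2)Σ_{e≠0,r} min(N_G(e), N_G(r+e))), and G' is the multiset with N_{G'}(r) = 0 and N_{G'}(e) = N_G(e) − min(N_G(e), N_G(r+e)) for e ≠ 0, r. -/
/-!
A family of disjoint recovery sets can always be rearranged to contain a prescribed recovery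
set `{r}` or `{e, r + e}` of size at most two. A member meeting it can simply be dropped,
except when `e` and `r + e` lie in different members `A` and `B`; those two are then replaced
by `A + B - {e, r + e}`, which again sums to `r`. So removing a small recovery set lowers `t`
by exactly one, and removing them one at a time leads from `G` to `G'` after `N_G(r)`
singletons and `(1/2) ∑ min (N_G(e), N_G(r + e))` pairs.
-/

namespace RecoverySet

open Multiset

theorem pair_le_iff {α : Type*} {a b : α} {s : Multiset α} (hab : a ≠ b) :
    {a, b} ≤ s ↔ a ∈ s ∧ b ∈ s := by
  rw [insert_eq_cons, cons_le_of_notMem (by simpa using hab), singleton_le]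

theorem sub_lt_self_of_le {α : Type*} [DecidableEq α] {s t : Multiset α} (hts : t ≤ s)
    (ht : t ≠ 0) : s - t < s := by
  refine lt_of_le_of_ne tsub_le_self fun h => ht ?_
  have h' := tsub_add_cancel_of_le hts
  rw [h] at h'
  exact left_eq_add.1 h'.symm

theorem mem_sub_of_notMem {α : Type*} [DecidableEq α] {a : α} {s t : Multiset α} (hs : a ∈ s)
    (ht : a ∉ t) : a ∈ s - t := by
  rwa [mem_sub, count_eq_zero.2 ht, count_pos]

section AddCommMonoid

variable {V : Type*} [AddCommMonoid V]

/-- Pairwise disjointness of the members of `C` as sub-multisets of `M` is `C.sum ≤ M`. -/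
def IsRecoveryFamily (r : V) (M : Multiset V) (C : Multiset (Multiset V)) : Prop :=
  C.sum ≤ M ∧ ∀ A ∈ C, A.sum = r

noncomputable def recoveryNumber (r : V) (M : Multiset V) : ℕ :=
  sSup {t | ∃ C, IsRecoveryFamily r M C ∧ card C = t}

theorem exists_fin_family_iff {r : V} {M : Multiset V} {t : ℕ} :
    (∃ S : Fin t → Multiset V, (∑ i, S i) ≤ M ∧ ∀ i, (S i).sum = r) ↔
      ∃ C, IsRecoveryFamily r M C ∧ card C = t := by
  constructor
  · rintro ⟨S, hle, hsum⟩
    refine ⟨Finset.univ.val.map S, ⟨hle, ?_⟩, by simp⟩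
    simpa using hsum
  · rintro ⟨⟨l⟩, ⟨hle, hsum⟩, rfl⟩
    refine ⟨l.get, ?_, fun i => hsum _ (l.get_mem i)⟩
    calc ∑ i, l.get i = l.sum := Fin.sum_univ_getElem l
      _ ≤ M := hle

theorem card_le_card_of_isRecoveryFamily {r : V} (hr : r ≠ 0) {M : Multiset V}
    {C : Multiset (Multiset V)} (hC : IsRecoveryFamily r M C) : card C ≤ card M := by
  have hpos : ∀ n ∈ C.map card, 1 ≤ n := by
    intro n hn
    obtain ⟨A, hA, rfl⟩ := mem_map.1 hn
    refine card_pos.2 fun h => hr ?_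
    rw [← hC.2 A hA, h, sum_zero]
  calc card C ≤ (C.map card).sum := by simpa using card_nsmul_le_sum hpos
    _ = card C.sum := (card_join C).symm
    _ ≤ card M := card_le_card hC.1

theorem sSup_fin_families_eq (r : V) (M : Multiset V) :
    sSup {t : ℕ | ∃ S : Fin t → Multiset V, (∑ i, S i) ≤ M ∧ ∀ i, (S i).sum = r} =
      recoveryNumber r M :=
  congrArg sSup (Set.ext fun _ => exists_fin_family_iff)

theorem bddAbove_recoveryNumber {r : V} (hr : r ≠ 0) (M : Multiset V) :
    BddAbove {t | ∃ C, IsRecoveryFamily r M C ∧ card C = t} := by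
  refine ⟨card M, ?_⟩
  rintro _ ⟨C, hC, rfl⟩
  exact card_le_card_of_isRecoveryFamily hr hC

theorem exists_isRecoveryFamily_card_eq {r : V} (hr : r ≠ 0) (M : Multiset V) :
    ∃ C, IsRecoveryFamily r M C ∧ card C = recoveryNumber r M :=
  Nat.sSup_mem (s := {t | ∃ C, IsRecoveryFamily r M C ∧ card C = t})
    ⟨0, 0, ⟨by simp, by simp⟩, rfl⟩ (bddAbove_recoveryNumber hr M)

theorem card_le_recoveryNumber {r : V} (hr : r ≠ 0) {M : Multiset V}
    {C : Multiset (Multiset V)} (hC : IsRecoveryFamily r M C) :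
    card C ≤ recoveryNumber r M :=
  le_csSup (bddAbove_recoveryNumber hr M) ⟨C, hC, rfl⟩

variable [DecidableEq V]

namespace IsRecoveryFamily

variable {r : V} {M P A : Multiset V} {C : Multiset (Multiset V)}

theorem cons (hC : IsRecoveryFamily r (M - P) C) (hPM : P ≤ M) (hP : P.sum = r) :
    IsRecoveryFamily r M (P ::ₘ C) := by
  refine ⟨?_, fun A hA => ?_⟩
  · rw [sum_cons, ← add_tsub_cancel_of_le hPM]
    exact add_le_add le_rfl hC.1
  · rcases mem_cons.1 hA with rfl | hA
    exacts [hP, hC.2 A hA]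

theorem sub_of_le_sub (hC : IsRecoveryFamily r M C) (hP : P ≤ M - C.sum) :
    IsRecoveryFamily r (M - P) C := by
  refine ⟨le_tsub_of_add_le_right ?_, hC.2⟩
  calc C.sum + P ≤ C.sum + (M - C.sum) := add_le_add le_rfl hP
    _ = M := add_tsub_cancel_of_le hC.1

theorem erase_sub (hC : IsRecoveryFamily r M C) (hA : A ∈ C) (hP : P ≤ A + (M - C.sum)) :
    IsRecoveryFamily r (M - P) (C.erase A) := by
  refine ⟨le_tsub_of_add_le_right ?_, fun B hB => hC.2 B (mem_of_mem_erase hB)⟩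
  calc (C.erase A).sum + P ≤ (C.erase A).sum + (A + (M - C.sum)) := add_le_add le_rfl hP
    _ = M := by rw [← add_assoc, add_comm _ A, sum_erase hA, add_tsub_cancel_of_le hC.1]

end IsRecoveryFamily

theorem recoveryNumber_eq_sub_add_one {r : V} (hr : r ≠ 0) {M P : Multiset V} (hPM : P ≤ M)
    (hP : P.sum = r)
    (hexch : ∀ C, IsRecoveryFamily r M C →
      ∃ C', IsRecoveryFamily r (M - P) C' ∧ card C ≤ card C' + 1) :
    recoveryNumber r M = recoveryNumber r (M - P) + 1 := by
  apply le_antisymm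
  · obtain ⟨C, hC, hcard⟩ := exists_isRecoveryFamily_card_eq hr M
    obtain ⟨C', hC', hle⟩ := hexch C hC
    have := card_le_recoveryNumber hr hC'
    omega
  · obtain ⟨C, hC, hcard⟩ := exists_isRecoveryFamily_card_eq hr (M - P)
    have := card_le_recoveryNumber hr (hC.cons hPM hP)
    rw [card_cons] at this
    omega

theorem recoveryNumber_eq_erase_add_one {r : V} (hr : r ≠ 0) {M : Multiset V} (h : r ∈ M) :
    recoveryNumber r M = recoveryNumber r (M.erase r) + 1 := by
  rw [← sub_singleton]
  refine recoveryNumber_eq_sub_add_one hr (singleton_le.2 h) (sum_singleton r) fun C hC => ?_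
  by_cases hrC : r ∈ C.sum
  · obtain ⟨A, hA, hrA⟩ := mem_join.1 hrC
    exact ⟨C.erase A, hC.erase_sub hA ((singleton_le.2 hrA).trans (le_add_right _ _)),
      (card_erase_add_one hA).ge⟩
  · exact ⟨C, hC.sub_of_le_sub (singleton_le.2 (mem_sub_of_notMem h hrC)), Nat.le_succ _⟩

end AddCommMonoid

section AddCommGroup

variable {V : Type*} [AddCommGroup V] [DecidableEq V] {r e f : V} {M P A B : Multiset V}
  {C : Multiset (Multiset V)}

theorem IsRecoveryFamily.merge_sub (hC : IsRecoveryFamily r M C) (hA : A ∈ C)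
    (hB : B ∈ C.erase A) (hP : P ≤ A + B) (hPr : P.sum = r) :
    IsRecoveryFamily r (M - P) ((A + B - P) ::ₘ (C.erase A).erase B) := by
  have hmerged : (A + B - P).sum = r := by
    have h := congrArg sum (tsub_add_cancel_of_le hP)
    rw [sum_add, sum_add, hPr, hC.2 A hA, hC.2 B (mem_of_mem_erase hB)] at h
    exact add_right_cancel h
  refine ⟨le_tsub_of_add_le_right ?_, fun X hX => ?_⟩
  · calc ((A + B - P) ::ₘ (C.erase A).erase B).sum + P = C.sum := by
          rw [sum_cons, add_right_comm, tsub_add_cancel_of_le hP, add_assoc, sum_erase hB,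
            sum_erase hA]
      _ ≤ M := hC.1
  · rcases mem_cons.1 hX with rfl | hX
    exacts [hmerged, hC.2 X (mem_of_mem_erase (mem_of_mem_erase hX))]

theorem IsRecoveryFamily.exists_sub_pair_of_mem (hC : IsRecoveryFamily r M C) (hef : e ≠ f)
    (hsum : e + f = r) (hf : f ∈ M) (hA : A ∈ C) (heA : e ∈ A) :
    ∃ C', IsRecoveryFamily r (M - {e, f}) C' ∧ card C ≤ card C' + 1 := by
  by_cases hfC : f ∈ (C.erase A).sum
  · obtain ⟨B, hB, hfB⟩ := mem_join.1 hfC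
    refine ⟨_, hC.merge_sub hA hB ?_ (by simp [hsum]), ?_⟩
    · rw [insert_eq_cons, ← singleton_add]
      exact add_le_add (singleton_le.2 heA) (singleton_le.2 hfB)
    · rw [card_cons, ← card_erase_add_one hA, ← card_erase_add_one hB]
  · refine ⟨C.erase A, hC.erase_sub hA ?_, (card_erase_add_one hA).ge⟩
    by_cases hfA : f ∈ A
    · exact ((pair_le_iff hef).2 ⟨heA, hfA⟩).trans (le_add_right _ _)
    · rw [insert_eq_cons, ← singleton_add]
      refine add_le_add (singleton_le.2 heA) (singleton_le.2 (mem_sub_of_notMem hf ?_))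
      rw [← sum_erase hA, mem_add]
      exact not_or_intro hfA hfC

theorem IsRecoveryFamily.exists_sub_pair (hC : IsRecoveryFamily r M C) (hef : e ≠ f)
    (hsum : e + f = r) (he : e ∈ M) (hf : f ∈ M) :
    ∃ C', IsRecoveryFamily r (M - {e, f}) C' ∧ card C ≤ card C' + 1 := by
  by_cases heC : e ∈ C.sum
  · obtain ⟨A, hA, heA⟩ := mem_join.1 heC
    exact hC.exists_sub_pair_of_mem hef hsum hf hA heA
  by_cases hfC : f ∈ C.sum
  · obtain ⟨B, hB, hfB⟩ := mem_join.1 hfC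
    rw [pair_comm]
    exact hC.exists_sub_pair_of_mem hef.symm ((add_comm f e).trans hsum) he hB hfB
  exact ⟨C, hC.sub_of_le_sub ((pair_le_iff hef).2
    ⟨mem_sub_of_notMem he heC, mem_sub_of_notMem hf hfC⟩), Nat.le_succ _⟩

theorem recoveryNumber_eq_sub_pair_add_one (hr : r ≠ 0) (hef : e ≠ f) (hsum : e + f = r)
    (he : e ∈ M) (hf : f ∈ M) :
    recoveryNumber r M = recoveryNumber r (M - {e, f}) + 1 :=
  recoveryNumber_eq_sub_add_one hr ((pair_le_iff hef).2 ⟨he, hf⟩) (by simp [hsum])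
    fun _ hC => hC.exists_sub_pair hef hsum he hf

end AddCommGroup

section Greedy

variable {V : Type*} [AddCommGroup V] [DecidableEq V] {r e : V} {M M' : Multiset V}

/-- `M'` is the multiset `G'` left over once all recovery sets of size at most two are
removed from `M`. -/
def IsGreedyResidual (r : V) (M M' : Multiset V) : Prop :=
  M'.count r = 0 ∧ M'.count 0 = M.count 0 ∧
    ∀ e, e ≠ 0 → e ≠ r → M'.count e = M.count e - min (M.count e) (M.count (r + e))

/-- Every pair `{e, r + e}` is counted twice, once from each of its elements. -/
def pairCount [Fintype V] (r : V) (M : Multiset V) : ℕ :=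
  ∑ e ∈ Finset.univ.filter (fun e : V => e ≠ 0 ∧ e ≠ r), min (M.count e) (M.count (r + e))

theorem IsGreedyResidual.erase (hr : r ≠ 0) (h : IsGreedyResidual r M M') :
    IsGreedyResidual r (M.erase r) M' := by
  obtain ⟨hr', h0, hM'⟩ := h
  refine ⟨hr', by rwa [count_erase_of_ne hr.symm], fun e he0 her => ?_⟩
  rw [count_erase_of_ne her, count_erase_of_ne (by simpa using he0)]
  exact hM' e he0 her

theorem pairCount_erase [Fintype V] (r : V) (M : Multiset V) :
    pairCount r (M.erase r) = pairCount r M := by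
  refine Finset.sum_congr rfl fun e he => ?_
  obtain ⟨he0, her⟩ := (Finset.mem_filter.1 he).2
  rw [count_erase_of_ne her, count_erase_of_ne (by simpa using he0)]

theorem IsGreedyResidual.eq_of_forall_min_eq_zero (h : IsGreedyResidual r M M')
    (hr : r ∉ M) (hmin : ∀ e, e ≠ 0 → e ≠ r → min (M.count e) (M.count (r + e)) = 0) :
    M' = M := by
  obtain ⟨hr', h0, hM'⟩ := h
  ext e
  by_cases he0 : e = 0
  · rwa [he0]
  by_cases her : e = r
  · rw [her, hr', count_eq_zero.2 hr]
  rw [hM' e he0 her, hmin e he0 her, Nat.sub_zero]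

theorem pairCount_eq_zero [Fintype V]
    (hmin : ∀ e, e ≠ 0 → e ≠ r → min (M.count e) (M.count (r + e)) = 0) :
    pairCount r M = 0 :=
  Finset.sum_eq_zero fun e he => hmin e (Finset.mem_filter.1 he).2.1 (Finset.mem_filter.1 he).2.2

omit [DecidableEq V] in
theorem pair_le_of_mem (hr : r ≠ 0) (he : e ∈ M) (hf : r + e ∈ M) : {e, r + e} ≤ M :=
  (pair_le_iff (right_ne_add.2 hr)).2 ⟨he, hf⟩

variable [Module (ZMod 2) V]

omit [DecidableEq V] in
theorem add_add_cancel_left (r e : V) : r + (r + e) = e := by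
  rw [← add_assoc, ZModModule.add_self, zero_add]

theorem count_add_pair (r e x : V) : count (r + x) {e, r + e} = count x {e, r + e} := by
  have h : r + x = e ↔ x = r + e :=
    ⟨fun h => by rw [← h, add_add_cancel_left], fun h => by rw [h, add_add_cancel_left]⟩
  simp only [insert_eq_cons, count_cons, count_singleton, h, add_right_inj]
  exact add_comm _ _

theorem min_count_sub_pair (hr : r ≠ 0) (he : e ∈ M) (hf : r + e ∈ M) (x : V) :
    min (M.count x) (M.count (r + x)) =
      min ((M - {e, r + e}).count x) ((M - {e, r + e}).count (r + x)) + count x {e, r + e} := by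
  have hx := count_le_of_le x (pair_le_of_mem hr he hf)
  have hrx := count_le_of_le (r + x) (pair_le_of_mem hr he hf)
  rw [count_add_pair] at hrx
  rw [count_sub, count_sub, count_add_pair]
  omega

omit [DecidableEq V] in
theorem ne_zero_and_ne_of_mem_pair (he0 : e ≠ 0) (her : e ≠ r) :
    ∀ x ∈ ({e, r + e} : Multiset V), x ≠ 0 ∧ x ≠ r := by
  simp only [insert_eq_cons, mem_cons, mem_singleton]
  rintro x (rfl | rfl)
  · exact ⟨he0, her⟩
  · exact ⟨fun h => her (by rw [← add_add_cancel_left r e, h, add_zero]), add_ne_left.2 he0⟩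

theorem pairCount_sub_pair [Fintype V] (hr : r ≠ 0) (he0 : e ≠ 0) (her : e ≠ r) (he : e ∈ M)
    (hf : r + e ∈ M) : pairCount r M = pairCount r (M - {e, r + e}) + 2 := by
  have hmem : ∀ x ∈ ({e, r + e} : Multiset V),
      x ∈ Finset.univ.filter (fun x => x ≠ 0 ∧ x ≠ r) := by
    simpa using ne_zero_and_ne_of_mem_pair he0 her
  rw [pairCount, Finset.sum_congr rfl fun x _ => min_count_sub_pair hr he hf x,
    Finset.sum_add_distrib, sum_count_eq_card hmem, card_pair]
  rfl

theorem IsGreedyResidual.sub_pair (hr : r ≠ 0) (he0 : e ≠ 0) (her : e ≠ r) (he : e ∈ M)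
    (hf : r + e ∈ M) (h : IsGreedyResidual r M M') :
    IsGreedyResidual r (M - {e, r + e}) M' := by
  obtain ⟨hr', h0, hM'⟩ := h
  refine ⟨hr', ?_, fun x hx0 hxr => ?_⟩
  · rwa [count_sub, count_eq_zero.2 fun h => (ne_zero_and_ne_of_mem_pair he0 her 0 h).1 rfl,
      Nat.sub_zero]
  · have hmin := min_count_sub_pair hr he hf x
    have hx := count_le_of_le x (pair_le_of_mem hr he hf)
    have hsub := count_sub x M {e, r + e}
    rw [hM' x hx0 hxr]
    omega

theorem recoveryNumber_eq_of_isGreedyResidual [Fintype V] (hr : r ≠ 0)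
    (h : IsGreedyResidual r M M') :
    recoveryNumber r M = (M.count r + pairCount r M / 2) + recoveryNumber r M' := by
  induction M using strongInductionOn with
  | ih M ih =>
  by_cases hrM : r ∈ M
  · have hcount : (M.erase r).count r + 1 = M.count r := by
      rw [count_erase_self, Nat.sub_add_cancel (count_pos.2 hrM)]
    rw [recoveryNumber_eq_erase_add_one hr hrM, ih _ (erase_lt.2 hrM) (h.erase hr),
      pairCount_erase, ← hcount]
    omega
  by_cases hpair : ∃ e, e ≠ 0 ∧ e ≠ r ∧ e ∈ M ∧ r + e ∈ M
  · obtain ⟨e, he0, her, he, hf⟩ := hpair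
    have hsum : e + (r + e) = r := by rw [add_left_comm, ZModModule.add_self, add_zero]
    have hcount : (M - {e, r + e}).count r = M.count r := by
      rw [count_sub, count_eq_zero.2 fun h => (ne_zero_and_ne_of_mem_pair he0 her r h).2 rfl,
        Nat.sub_zero]
    have hlt : M - {e, r + e} < M := sub_lt_self_of_le (pair_le_of_mem hr he hf) cons_ne_zero
    rw [recoveryNumber_eq_sub_pair_add_one hr (right_ne_add.2 hr) hsum he hf,
      ih _ hlt (h.sub_pair hr he0 her he hf), pairCount_sub_pair hr he0 her he hf, hcount]
    omega
  · have hmin : ∀ e, e ≠ 0 → e ≠ r → min (M.count e) (M.count (r + e)) = 0 := by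
      intro e he0 her
      simp only [Nat.min_eq_zero_iff, count_eq_zero]
      by_contra! hmem
      exact hpair ⟨e, he0, her, hmem⟩
    rw [h.eq_of_forall_min_eq_zero hrM hmin, pairCount_eq_zero hmin, count_eq_zero.2 hrM]
    simp

end Greedy

end RecoverySet

/-- greedy lemma: for nonzero `r`, the maximum number `t(G)` of
pairwise disjoint recovery sets for `r` in `G` satisfies
`t(G) = t≤2(G) + t(G')`, where `t≤2(G) = N_G(r) + (1/2)∑_{e≠0,r} min(N_G(e), N_G(r+e))`
and `G'` is the multiset with `N_{G'}(r) = 0`, `N_{G'}(0) = N_G(0)` and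
`N_{G'}(e) = N_G(e) − min(N_G(e), N_G(r+e))` for `e ≠ 0, r`. -/
theorem greedy_small_recovery_sets_optimal (k : ℕ) (r : Fin k → ZMod 2) (hr : r ≠ 0)
    (G G' : Multiset (Fin k → ZMod 2))
    (hG'r : G'.count r = 0) (hG'0 : G'.count 0 = G.count 0)
    (hG' : ∀ e : Fin k → ZMod 2, e ≠ 0 → e ≠ r →
      G'.count e = G.count e - min (G.count e) (G.count (r + e))) :
    sSup {t : ℕ | ∃ S : Fin t → Multiset (Fin k → ZMod 2),
        (∑ i, S i) ≤ G ∧ ∀ i, (S i).sum = r}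
      = (G.count r +
          (∑ e ∈ Finset.univ.filter (fun e : Fin k → ZMod 2 => e ≠ 0 ∧ e ≠ r),
            min (G.count e) (G.count (r + e))) / 2)
        + sSup {t : ℕ | ∃ S : Fin t → Multiset (Fin k → ZMod 2),
            (∑ i, S i) ≤ G' ∧ ∀ i, (S i).sum = r} := by
  rw [RecoverySet.sSup_fin_families_eq, RecoverySet.sSup_fin_families_eq]
  exact RecoverySet.recoveryNumber_eq_of_isGreedyResidual hr ⟨hG'r, hG'0, hG'⟩
end

section
/- Let G be a multiset of vectors from F_2^k in which every nonzero vector occurs exactly 2m times (m a positive integer), and fix a nonzero r ∈ F_2^k. Then the maximum number of pairwise disjoint recovery sets for r in G is exactly m·2^k, and the unique service achieving m·2^k recovery sets (with equal columns indistinguishable) uses 2m copies of the singleton {r} and 2m copies of each pair {e, r+e} for e ∉ {0, r}; in particular it uses every nonzero element of G. -/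
/-!
Every recovery set for `r ≠ 0` is nonempty, and a singleton recovery set is `{r}`; hence each
recovery set `s` satisfies `2 ≤ count r s + card s`. Summing over a service of size `t` inside the
nonzero part of `G` gives `2t ≤ 2m + 2m(2^k - 1)`, and equality forces the service to use all of
it with every recovery set of size at most two, i.e. `{r}` or `{e, r + e}`.

Such a service is determined by its sum: sending every vector `e` to the unique set `{r}` or
`{e, r + e}` through it turns each recovery set `s` into `card s` copies of `s`, so the sum
determines the service counted with these positive weights, hence the service itself.
-/

open Multiset

lemma Multiset.eq_of_bind_replicate_card_eq {α : Type*} {L L' : Multiset (Multiset α)}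
    (hL : 0 ∉ L) (hL' : 0 ∉ L')
    (h : L.bind (fun s => replicate (card s) s) = L'.bind (fun s => replicate (card s) s)) :
    L = L' := by
  classical
  have hcount : ∀ (L : Multiset (Multiset α)) c,
      count c (L.bind fun s => replicate (card s) s) = card c * count c L := by
    intro L c
    induction L using Multiset.induction_on with
    | empty => simp
    | cons s L ih =>
      rw [cons_bind, count_add, ih, count_replicate, count_cons]
      by_cases hs : s = c
      · simp [hs, mul_add, add_comm]
      · simp [hs, Ne.symm hs]
  ext c
  by_cases hc : c = 0
  · rw [hc, count_eq_zero.mpr hL, count_eq_zero.mpr hL']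
  · have := congrArg (count c) h
    rw [hcount, hcount] at this
    exact Nat.eq_of_mul_eq_mul_left (card_pos.mpr hc) this

lemma Multiset.exists_coe_ofFn_eq {α : Type*} {R : Multiset α} {n : ℕ} (h : card R = n) :
    ∃ S : Fin n → α, (List.ofFn S : Multiset α) = R := by
  subst h
  refine ⟨fun i => R.toList.get (Fin.cast (length_toList R).symm i), ?_⟩
  rw [← List.ofFn_congr (length_toList R), List.ofFn_get, coe_toList]

lemma sum_count_add_card_eq {α ι : Type*} [DecidableEq α] [Fintype ι] (S : ι → Multiset α)
    (r : α) : ∑ i, (count r (S i) + card (S i)) = count r (∑ i, S i) + card (∑ i, S i) := by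
  rw [Finset.sum_add_distrib, count_sum', card_sum]

section RecoverySet

variable {V : Type*} [AddCommGroup V] {r : V} {s : Multiset V}

def IsRecoverySet (r : V) (s : Multiset V) : Prop := (0 : V) ∉ s ∧ s.sum = r

lemma IsRecoverySet.ne_zero (hr : r ≠ 0) (hs : IsRecoverySet r s) : s ≠ 0 := by
  rintro rfl
  exact hr (by simpa using hs.2.symm)

lemma IsRecoverySet.eq_singleton (hs : IsRecoverySet r s) (h : card s = 1) : s = {r} := by
  obtain ⟨a, rfl⟩ := card_eq_one.mp h
  rw [← hs.2, sum_singleton]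

lemma IsRecoverySet.two_le_count_add_card [DecidableEq V] (hr : r ≠ 0)
    (hs : IsRecoverySet r s) : 2 ≤ count r s + card s := by
  by_cases h : card s = 1
  · simp [hs.eq_singleton h]
  · have := card_pos.mpr (hs.ne_zero hr)
    omega

section Service

variable {ι : Type*} [DecidableEq V] [Fintype ι] {H : Multiset V} {S : ι → Multiset V}

lemma two_mul_card_le_count_add_card (hr : r ≠ 0) (hS : ∀ i, IsRecoverySet r (S i))
    (hle : ∑ i, S i ≤ H) : 2 * Fintype.card ι ≤ count r H + card H :=
  calc 2 * Fintype.card ι = ∑ _i : ι, 2 := by simp [mul_comm]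
    _ ≤ ∑ i, (count r (S i) + card (S i)) :=
      Finset.sum_le_sum fun i _ => (hS i).two_le_count_add_card hr
    _ = count r (∑ i, S i) + card (∑ i, S i) := sum_count_add_card_eq S r
    _ ≤ count r H + card H := add_le_add (count_le_of_le r hle) (card_le_card hle)

lemma sum_eq_and_card_le_two_of_two_mul_card_eq (hr : r ≠ 0) (hS : ∀ i, IsRecoverySet r (S i))
    (hle : ∑ i, S i ≤ H) (heq : 2 * Fintype.card ι = count r H + card H) :
    ∑ i, S i = H ∧ ∀ i, card (S i) ≤ 2 := by
  have hcount := count_le_of_le r hle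
  have hcard := card_le_card hle
  have hlow := two_mul_card_le_count_add_card hr hS le_rfl
  have hsum := sum_count_add_card_eq S r
  have hconst : ∑ _i : ι, 2 = 2 * Fintype.card ι := by simp [mul_comm]
  have htight : ∀ i, count r (S i) + card (S i) = 2 := by
    have hle2 : ∀ i ∈ Finset.univ, 2 ≤ count r (S i) + card (S i) :=
      fun i _ => (hS i).two_le_count_add_card hr
    refine fun i => ((Finset.sum_eq_sum_iff_of_le hle2).mp ?_ i (Finset.mem_univ i)).symm
    omega
  exact ⟨eq_of_le_of_card_le hle (by omega), fun i => by have := htight i; omega⟩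

end Service

variable [Module (ZMod 2) V]

lemma ZModModule.add_eq_zero_iff_eq {a b : V} : a + b = 0 ↔ a = b := by
  rw [← ZModModule.sub_eq_add, sub_eq_zero]

lemma sum_pair_add_eq_two_nsmul {s : Finset V} (hs : ∀ e ∈ s, r + e ∈ s) :
    ∑ e ∈ s, ({e, r + e} : Multiset V) = 2 • s.val := by
  have hinv : ∀ e ∈ s, r + (r + e) = e := fun e _ => by
    rw [← add_assoc, ZModModule.add_self, zero_add]
  have hshift : ∑ e ∈ s, ({r + e} : Multiset V) = ∑ e ∈ s, {e} :=
    Finset.sum_nbij' (r + ·) (r + ·) hs hs hinv hinv fun _ _ => rfl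
  simp_rw [insert_eq_cons, ← singleton_add, Finset.sum_add_distrib, hshift, two_nsmul]
  rw [Finset.sum_eq_multiset_sum, sum_map_singleton]

lemma IsRecoverySet.eq_pair (hs : IsRecoverySet r s) (h : card s = 2) :
    ∃ a, a ≠ 0 ∧ a ≠ r ∧ s = {a, r + a} := by
  obtain ⟨a, b, rfl⟩ := card_eq_two.mp h
  obtain ⟨h0, hsum⟩ := hs
  have hb : b = r + a := by
    rw [← hsum, insert_eq_cons, sum_cons, sum_singleton, add_comm a b, add_assoc,
      ZModModule.add_self, add_zero]
  refine ⟨a, fun ha => h0 (by simp [ha]), fun ha => h0 (by simp [hb, ha, ZModModule.add_self]),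
    by rw [hb]⟩

variable [DecidableEq V]

def canonicalRecoverySet (r e : V) : Multiset V :=
  if e = r then {r} else {e, r + e}

lemma IsRecoverySet.map_canonicalRecoverySet (hr : r ≠ 0) (hs : IsRecoverySet r s)
    (h2 : card s ≤ 2) : s.map (canonicalRecoverySet r) = replicate (card s) s := by
  have := card_pos.mpr (hs.ne_zero hr)
  obtain h | h : card s = 1 ∨ card s = 2 := by omega
  · rw [h, hs.eq_singleton h]
    simp [canonicalRecoverySet]
  · obtain ⟨a, ha0, har, rfl⟩ := hs.eq_pair h
    have hra : r + a ≠ r := by simpa using ha0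
    simp [canonicalRecoverySet, har, hra, ← add_assoc, ZModModule.add_self, pair_comm a,
      replicate_succ]

lemma bind_replicate_card_eq_map_sum (hr : r ≠ 0) {L : Multiset (Multiset V)}
    (hL : ∀ s ∈ L, IsRecoverySet r s ∧ card s ≤ 2) :
    L.bind (fun s => replicate (card s) s) = L.sum.map (canonicalRecoverySet r) := by
  rw [← join, map_join, ← bind.eq_def]
  exact Multiset.bind_congr fun s hs =>
    ((hL s hs).1.map_canonicalRecoverySet hr (hL s hs).2).symm

lemma recoverySets_eq_of_sum_eq (hr : r ≠ 0) {L L' : Multiset (Multiset V)}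
    (hL : ∀ s ∈ L, IsRecoverySet r s ∧ card s ≤ 2)
    (hL' : ∀ s ∈ L', IsRecoverySet r s ∧ card s ≤ 2) (h : L.sum = L'.sum) : L = L' := by
  refine eq_of_bind_replicate_card_eq (fun h0 => ?_) (fun h0 => ?_) ?_
  · exact (hL 0 h0).1.ne_zero hr rfl
  · exact (hL' 0 h0).1.ne_zero hr rfl
  · rw [bind_replicate_card_eq_map_sum hr hL, bind_replicate_card_eq_map_sum hr hL', h]

end RecoverySet

section NonzeroPart

variable {V : Type*} [Zero V] [DecidableEq V] {r : V} {m : ℕ} {G H : Multiset V}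

lemma sum_le_filter_ne_zero {ι : Type*} [Fintype ι] {S : ι → Multiset V}
    (hle : ∑ i, S i ≤ H) (h0 : ∀ i, (0 : V) ∉ S i) :
    ∑ i, S i ≤ H.filter (· ≠ 0) := by
  refine le_filter.mpr ⟨hle, fun a ha => ?_⟩
  obtain ⟨i, -, hai⟩ := mem_sum.mp ha
  exact ne_of_mem_of_not_mem hai (h0 i)

variable [Fintype V]

lemma filter_ne_zero_eq_nsmul (hG : ∀ e : V, e ≠ 0 → G.count e = 2 * m) :
    G.filter (· ≠ 0) = (2 * m) • (Finset.univ.erase 0).val := by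
  ext a
  by_cases ha : a = 0 <;> simp [ha, hG]

lemma count_add_card_filter_ne_zero (hG : ∀ e : V, e ≠ 0 → G.count e = 2 * m) (hr : r ≠ 0) :
    count r (G.filter (· ≠ 0)) + card (G.filter (· ≠ 0)) = 2 * (m * Fintype.card V) := by
  obtain ⟨n, hn⟩ : ∃ n, Fintype.card V = n + 1 := Nat.exists_eq_add_one.mpr Fintype.card_pos
  rw [filter_ne_zero_eq_nsmul hG, count_nsmul, card_nsmul]
  simp [hr, hn]
  ring

lemma univ_erase_zero_val (hr : r ≠ 0) :
    (Finset.univ.erase (0 : V)).val =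
      r ::ₘ (Finset.univ.filter fun e : V => e ≠ 0 ∧ e ≠ r).val := by
  rw [← Finset.insert_val_of_notMem (by simp)]
  congr 1
  ext e
  by_cases he : e = r <;> simp [he, hr]

end NonzeroPart

section OptimalService

variable {V : Type*} [AddCommGroup V] [Fintype V] [DecidableEq V] {r : V} {m : ℕ}

/-- The pair `{e, r + e}` is listed both for `e` and for `r + e`, so it occurs `2m` times. -/
def optimalService (m : ℕ) (r : V) : Multiset (Multiset V) :=
  replicate (2 * m) {r} +
    (Finset.univ.filter (fun e : V => e ≠ 0 ∧ e ≠ r)).val.bind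
      (fun e => replicate m {e, r + e})

lemma card_optimalService (hr : r ≠ 0) : card (optimalService m r) = m * Fintype.card V := by
  have hcard : (Finset.univ.erase (0 : V)).card =
      (Finset.univ.filter fun e : V => e ≠ 0 ∧ e ≠ r).card + 1 := by
    rw [Finset.card_def, univ_erase_zero_val hr, card_cons, Finset.card_def]
  rw [Finset.card_erase_of_mem (Finset.mem_univ _), Finset.card_univ] at hcard
  have hV : Fintype.card V = (Finset.univ.filter fun e : V => e ≠ 0 ∧ e ≠ r).card + 2 := by
    have := Fintype.card_pos (α := V)
    omega
  simp only [optimalService, card_add, card_replicate, card_bind, Function.comp_def, map_const',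
    sum_replicate, smul_eq_mul, Finset.card_val, hV]
  ring

variable [Module (ZMod 2) V]

lemma add_mem_filter_ne_zero_and_ne {e : V}
    (he : e ∈ Finset.univ.filter (fun e : V => e ≠ 0 ∧ e ≠ r)) :
    r + e ∈ Finset.univ.filter (fun e : V => e ≠ 0 ∧ e ≠ r) := by
  simp only [Finset.mem_filter, Finset.mem_univ, true_and, ne_eq, ZModModule.add_eq_zero_iff_eq,
    add_eq_left] at he ⊢
  exact ⟨Ne.symm he.2, he.1⟩

lemma isRecoverySet_and_card_le_two_of_mem_optimalService (hr : r ≠ 0) :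
    ∀ s ∈ optimalService m r, IsRecoverySet r s ∧ card s ≤ 2 := by
  intro s hs
  simp only [optimalService, mem_add, mem_replicate, mem_bind] at hs
  rcases hs with ⟨-, rfl⟩ | ⟨e, he, -, rfl⟩
  · simp [IsRecoverySet, Ne.symm hr]
  · have hre := (Finset.mem_filter.mp (add_mem_filter_ne_zero_and_ne he)).2.1
    simp [IsRecoverySet, ne_comm.mp (Finset.mem_filter.mp he).2.1, Ne.symm hre, add_assoc,
      add_comm e, ZModModule.add_self]

lemma sum_optimalService (hr : r ≠ 0) :
    (optimalService m r).sum = (2 * m) • (Finset.univ.erase 0).val := by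
  rw [optimalService, sum_add, sum_replicate, sum_bind, univ_erase_zero_val hr]
  simp only [sum_replicate]
  rw [← Finset.sum_eq_multiset_sum, ← Finset.smul_sum,
    sum_pair_add_eq_two_nsmul fun _ => add_mem_filter_ne_zero_and_ne, ← singleton_add,
    nsmul_add, smul_smul, mul_comm m 2]

end OptimalService

theorem unique_maximal_service_for_constant_request_general (k m : ℕ)
    (r : Fin k → ZMod 2) (hr : r ≠ 0)
    (G : Multiset (Fin k → ZMod 2))
    (hG : ∀ e : Fin k → ZMod 2, e ≠ 0 → G.count e = 2 * m) :
    IsGreatest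
      {t : ℕ | ∃ S : Fin t → Multiset (Fin k → ZMod 2),
        (∑ i, S i) ≤ G ∧ ∀ i, (0 : Fin k → ZMod 2) ∉ S i ∧ (S i).sum = r}
      (m * 2 ^ k) ∧
    ∀ S : Fin (m * 2 ^ k) → Multiset (Fin k → ZMod 2),
      (∑ i, S i) ≤ G → (∀ i, (0 : Fin k → ZMod 2) ∉ S i ∧ (S i).sum = r) →
      (↑(List.ofFn S) : Multiset (Multiset (Fin k → ZMod 2))) =
        Multiset.replicate (2 * m) ({r} : Multiset (Fin k → ZMod 2)) +
          (Finset.univ.filter (fun e : Fin k → ZMod 2 => e ≠ 0 ∧ e ≠ r)).val.bind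
            (fun e => Multiset.replicate m ({e, r + e} : Multiset (Fin k → ZMod 2)))
      ∧ (∑ i, S i) = G.filter (fun e => e ≠ 0) := by
  have hV : Fintype.card (Fin k → ZMod 2) = 2 ^ k := by simp
  have hbound := count_add_card_filter_ne_zero hG hr
  have hR := isRecoverySet_and_card_le_two_of_mem_optimalService (m := m) hr
  have hRsum : (optimalService m r).sum = G.filter (· ≠ 0) := by
    rw [sum_optimalService hr, filter_ne_zero_eq_nsmul hG]
  rw [hV] at hbound
  refine ⟨⟨?_, ?_⟩, fun S hle hS => ?_⟩
  · obtain ⟨S, hSR⟩ := exists_coe_ofFn_eq ((card_optimalService hr).trans (by rw [hV]))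
    refine ⟨S, ?_, fun i => (hR _ (hSR ▸ mem_coe.mpr (List.mem_ofFn.mpr ⟨i, rfl⟩))).1⟩
    rw [← List.sum_ofFn, ← sum_coe, hSR, hRsum]
    exact filter_le _ _
  · rintro t ⟨S, hle, hS⟩
    have := two_mul_card_le_count_add_card hr hS (sum_le_filter_ne_zero hle fun i => (hS i).1)
    rw [Fintype.card_fin] at this
    omega
  · obtain ⟨hsum, hcard⟩ := sum_eq_and_card_le_two_of_two_mul_card_eq hr hS
      (sum_le_filter_ne_zero hle fun i => (hS i).1) (by rw [Fintype.card_fin, hbound])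
    refine ⟨recoverySets_eq_of_sum_eq (L' := optimalService m r) hr (fun s hs => ?_) hR ?_,
      hsum⟩
    · obtain ⟨i, rfl⟩ := List.mem_ofFn.mp (mem_coe.mp hs)
      exact ⟨hS i, hcard i⟩
    · rw [sum_coe, List.sum_ofFn, hsum, hRsum]

/-- if every nonzero vector occurs in `G` exactly `2m` times
(`m > 0`) and `r ≠ 0`, then the maximum number of pairwise disjoint recovery
sets for `r` (of nonzero columns) in `G` is exactly `m·2^k`; moreover any
service by `m·2^k` such recovery sets is, as a multiset of recovery sets,
exactly `2m` copies of `{r}` together with `2m` copies of each pair `{e, r+e}`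
for `e ∉ {0, r}` (the bind below produces each unordered pair `2m` times,
`m` times from `e` and `m` times from `r+e`), and it uses every nonzero
element of `G`. -/
theorem unique_maximal_service_for_constant_request (k m : ℕ) (hm : 0 < m)
    (r : Fin k → ZMod 2) (hr : r ≠ 0)
    (G : Multiset (Fin k → ZMod 2))
    (hG : ∀ e : Fin k → ZMod 2, e ≠ 0 → G.count e = 2 * m) :
    IsGreatest
      {t : ℕ | ∃ S : Fin t → Multiset (Fin k → ZMod 2),
        (∑ i, S i) ≤ G ∧ ∀ i, (0 : Fin k → ZMod 2) ∉ S i ∧ (S i).sum = r}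
      (m * 2 ^ k) ∧
    ∀ S : Fin (m * 2 ^ k) → Multiset (Fin k → ZMod 2),
      (∑ i, S i) ≤ G → (∀ i, (0 : Fin k → ZMod 2) ∉ S i ∧ (S i).sum = r) →
      (↑(List.ofFn S) : Multiset (Multiset (Fin k → ZMod 2))) =
        Multiset.replicate (2 * m) ({r} : Multiset (Fin k → ZMod 2)) +
          (Finset.univ.filter (fun e : Fin k → ZMod 2 => e ≠ 0 ∧ e ≠ r)).val.bind
            (fun e => Multiset.replicate m ({e, r + e} : Multiset (Fin k → ZMod 2)))
      ∧ (∑ i, S i) = G.filter (fun e => e ≠ 0) :=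
  unique_maximal_service_for_constant_request_general k m r hr G hG
end

section
/- Let G be a multiset of vectors in F_2^2 with N_G((0,1)) ≤ N_G((1,0)) ≤ N_G((1,1)). Then the maximum t such that every sequence of t nonzero requests from F_2^2 can be served from G (by disjoint recovery sets) equals N_G((0,1)) + N_G((1,0)), which also equals the maximum t such that t copies of the single request (0,1) can be served. -/
namespace K2Aux

abbrev V := Fin 2 → ZMod 2

def e1 : V := ![1,0]
def e2 : V := ![0,1]
def e3 : V := ![1,1]

lemma vcases (v : V) (hv : v ≠ 0) : v = e1 ∨ v = e2 ∨ v = e3 := by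
  revert hv; revert v; decide

lemma vcases4 : ∀ v : V, v = 0 ∨ v = e1 ∨ v = e2 ∨ v = e3 := by decide

lemma sum_range_ite_lt {M : Type*} [AddCommMonoid M] (m1 m2 : M) (x : ℕ) :
    ∀ n, ∑ i ∈ Finset.range n, (if i < x then m1 else m2)
      = min x n • m1 + (n - x) • m2
  | 0 => by simp
  | (n+1) => by
    rw [Finset.sum_range_succ, sum_range_ite_lt m1 m2 x n]
    by_cases h : n < x
    · rw [if_pos h]
      rw [show min x n = n by omega, show min x (n+1) = n+1 by omega,
        show n - x = 0 by omega, show n + 1 - x = 0 by omega]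
      simp [succ_nsmul]
    · rw [if_neg h]
      rw [show min x n = x by omega, show min x (n+1) = x by omega,
        show n + 1 - x = (n - x) + 1 by omega]
      rw [succ_nsmul, add_assoc]

lemma sum_eq_counts (m : Multiset V) (j : Fin 2) :
    m.sum j = (m.count e1 : ZMod 2) * e1 j + (m.count e2 : ZMod 2) * e2 j
      + (m.count e3 : ZMod 2) * e3 j := by
  induction m using Multiset.induction with
  | empty => simp
  | cons v m ih =>
    have hv : v = 0 ∨ v = e1 ∨ v = e2 ∨ v = e3 := vcases4 v
    rw [Multiset.sum_cons]
    have hadd : (v + m.sum) j = v j + m.sum j := rfl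
    rw [hadd, ih]
    rcases hv with h | h | h | h <;> subst h <;>
      simp [Multiset.count_cons, e1, e2, e3,
        show ¬((![0,1]:V) = ![1,0]) by decide, show ¬((![1,1]:V) = ![1,0]) by decide,
        show ¬((![1,0]:V) = ![0,1]) by decide, show ¬((![1,1]:V) = ![0,1]) by decide,
        show ¬((![1,0]:V) = ![1,1]) by decide, show ¬((![0,1]:V) = ![1,1]) by decide,
        show ¬((0:V) = ![1,0]) by decide, show ¬((0:V) = ![0,1]) by decide,
        show ¬((0:V) = ![1,1]) by decide] <;> push_cast <;> ring

lemma serve_e2_le (G : Multiset V) {t : ℕ}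
    (h : ∃ S : Fin t → Multiset V, (∑ i, S i) ≤ G ∧ ∀ i, (S i).sum = e2) :
    t ≤ G.count e2 + G.count e1 := by
  obtain ⟨S, hle, hsum⟩ := h
  have key : ∀ i, 1 ≤ (S i).count e1 + (S i).count e2 := by
    intro i
    by_contra hc
    push_neg at hc
    have hc1 : (S i).count e1 = 0 := by omega
    have hc2 : (S i).count e2 = 0 := by omega
    have p0 := sum_eq_counts (S i) 0
    have p1 := sum_eq_counts (S i) 1
    rw [hsum i, hc1, hc2] at p0 p1
    simp [e1, e2, e3] at p0 p1
    rw [← p0] at p1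
    exact absurd p1 (by decide)
  calc t = ∑ _i : Fin t, 1 := by simp
    _ ≤ ∑ i, ((S i).count e1 + (S i).count e2) := Finset.sum_le_sum (fun i _ => key i)
    _ = (∑ i, S i).count e1 + (∑ i, S i).count e2 := by
        rw [Finset.sum_add_distrib, Multiset.count_sum', Multiset.count_sum']
    _ ≤ G.count e1 + G.count e2 :=
        add_le_add (Multiset.count_le_of_le _ hle) (Multiset.count_le_of_le _ hle)
    _ = G.count e2 + G.count e1 := add_comm _ _

lemma serve_all (G : Multiset V)
    (hab : G.count e2 ≤ G.count e1) (hbc : G.count e1 ≤ G.count e3)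
    {t : ℕ} (ht : t = G.count e2 + G.count e1)
    (R : Fin t → V) (hR : ∀ i, R i ≠ 0) :
    ∃ S : Fin t → Multiset V, (∑ i, S i) ≤ G ∧ ∀ i, (S i).sum = R i := by
  classical
  set a := G.count e2 with ha
  set b := G.count e1 with hb
  set c := G.count e3 with hc
  set s1 : Finset (Fin t) := Finset.univ.filter (fun i => R i = e1) with hs1
  set s2 : Finset (Fin t) := Finset.univ.filter (fun i => R i = e2) with hs2
  set s3 : Finset (Fin t) := Finset.univ.filter (fun i => R i = e3) with hs3
  set t1 := s1.card with ht1
  set t2 := s2.card with ht2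
  set t3 := s3.card with ht3
  have d12 : Disjoint s1 s2 := by
    rw [Finset.disjoint_left]; intro i hi1 hi2
    rw [hs1, Finset.mem_filter] at hi1; rw [hs2, Finset.mem_filter] at hi2
    rw [hi1.2] at hi2; exact absurd hi2.2 (by decide)
  have d13 : Disjoint s1 s3 := by
    rw [Finset.disjoint_left]; intro i hi1 hi2
    rw [hs1, Finset.mem_filter] at hi1; rw [hs3, Finset.mem_filter] at hi2
    rw [hi1.2] at hi2; exact absurd hi2.2 (by decide)
  have d23 : Disjoint s2 s3 := by
    rw [Finset.disjoint_left]; intro i hi1 hi2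
    rw [hs2, Finset.mem_filter] at hi1; rw [hs3, Finset.mem_filter] at hi2
    rw [hi1.2] at hi2; exact absurd hi2.2 (by decide)
  have d123 : Disjoint (s1 ∪ s2) s3 := Finset.disjoint_union_left.mpr ⟨d13, d23⟩
  have hunion : s1 ∪ s2 ∪ s3 = Finset.univ := by
    ext i
    simp only [hs1, hs2, hs3, Finset.mem_union, Finset.mem_filter, Finset.mem_univ,
      true_and, iff_true]
    have := vcases (R i) (hR i); tauto
  have hcard : t1 + t2 + t3 = t := by
    have h := congrArg Finset.card hunion
    rw [Finset.card_union_of_disjoint d123, Finset.card_union_of_disjoint d12,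
      Finset.card_univ, Fintype.card_fin] at h
    exact h
  -- the service plan
  set x3 := min t3 c with hx3
  set y3 := t3 - x3 with hy3
  set x2 := min t2 a with hx2
  set y2 := t2 - x2 with hy2
  set x1 := min t1 (b - (y2 + y3)) with hx1
  set y1 := t1 - x1 with hy1
  have r1 : x1 + y2 + y3 ≤ b := by omega
  have r2 : x2 + y1 + y3 ≤ a := by omega
  have r3 : x3 + y1 + y2 ≤ c := by omega
  set S : Fin t → Multiset V := fun i =>
    if h1 : R i = e1 then
      (if ((s1.equivFin ⟨i, by rw [hs1]; exact Finset.mem_filter.mpr ⟨Finset.mem_univ i, h1⟩⟩ : Fin s1.card) : ℕ) < x1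
        then {e1} else {e2, e3})
    else if h2 : R i = e2 then
      (if ((s2.equivFin ⟨i, by rw [hs2]; exact Finset.mem_filter.mpr ⟨Finset.mem_univ i, h2⟩⟩ : Fin s2.card) : ℕ) < x2
        then {e2} else {e1, e3})
    else
      (if ((s3.equivFin ⟨i, by rw [hs3]; exact Finset.mem_filter.mpr ⟨Finset.mem_univ i, ((vcases (R i) (hR i)).resolve_left h1).resolve_left h2⟩⟩ : Fin s3.card) : ℕ) < x3
        then {e3} else {e1, e2}) with hSdef
  have key : ∀ (s : Finset (Fin t)) (x : ℕ) (m1 m2 : Multiset V),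
      (∀ p : {i // i ∈ s}, S p.1 = if ((s.equivFin p : Fin s.card) : ℕ) < x then m1 else m2) →
      ∑ i ∈ s, S i = min x s.card • m1 + (s.card - x) • m2 := by
    intro s x m1 m2 hs
    rw [← Finset.sum_coe_sort s S,
      Fintype.sum_equiv s.equivFin _ (fun j : Fin s.card => if (j : ℕ) < x then m1 else m2) hs,
      Fin.sum_univ_eq_sum_range (fun n => if n < x then m1 else m2) s.card,
      sum_range_ite_lt]
  have hS1 : ∑ i ∈ s1, S i = x1 • ({e1} : Multiset V) + y1 • ({e2, e3} : Multiset V) := by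
    have hs : ∀ p : {i // i ∈ s1},
        S p.1 = if ((s1.equivFin p : Fin s1.card) : ℕ) < x1 then {e1} else {e2, e3} := by
      intro p
      have hp : R p.1 = e1 := by
        have h := p.2
        simp only [hs1, Finset.mem_filter, Finset.mem_univ, true_and] at h
        exact h
      simp only [hSdef, dif_pos hp]
    have hmin : x1 ⊓ s1.card = x1 := by omega
    have hsub : s1.card - x1 = y1 := by omega
    rw [key s1 x1 {e1} {e2, e3} hs]
    simp only [hmin, hsub]
  have hS2 : ∑ i ∈ s2, S i = x2 • ({e2} : Multiset V) + y2 • ({e1, e3} : Multiset V) := by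
    have hs : ∀ p : {i // i ∈ s2},
        S p.1 = if ((s2.equivFin p : Fin s2.card) : ℕ) < x2 then {e2} else {e1, e3} := by
      intro p
      have hp : R p.1 = e2 := by
        have h := p.2
        simp only [hs2, Finset.mem_filter, Finset.mem_univ, true_and] at h
        exact h
      have hp1 : ¬ R p.1 = e1 := by rw [hp]; decide
      simp only [hSdef, dif_neg hp1, dif_pos hp]
    have hmin : x2 ⊓ s2.card = x2 := by omega
    have hsub : s2.card - x2 = y2 := by omega
    rw [key s2 x2 {e2} {e1, e3} hs]
    simp only [hmin, hsub]
  have hS3 : ∑ i ∈ s3, S i = x3 • ({e3} : Multiset V) + y3 • ({e1, e2} : Multiset V) := by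
    have hs : ∀ p : {i // i ∈ s3},
        S p.1 = if ((s3.equivFin p : Fin s3.card) : ℕ) < x3 then {e3} else {e1, e2} := by
      intro p
      have hp : R p.1 = e3 := by
        have h := p.2
        simp only [hs3, Finset.mem_filter, Finset.mem_univ, true_and] at h
        exact h
      have hp1 : ¬ R p.1 = e1 := by rw [hp]; decide
      have hp2 : ¬ R p.1 = e2 := by rw [hp]; decide
      simp only [hSdef, dif_neg hp1, dif_neg hp2]
    have hmin : x3 ⊓ s3.card = x3 := by omega
    have hsub : s3.card - x3 = y3 := by omega
    rw [key s3 x3 {e3} {e1, e2} hs]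
    simp only [hmin, hsub]
  have hsplit : ∑ i, S i
      = (x1 • ({e1} : Multiset V) + y1 • ({e2, e3} : Multiset V))
      + (x2 • ({e2} : Multiset V) + y2 • ({e1, e3} : Multiset V))
      + (x3 • ({e3} : Multiset V) + y3 • ({e1, e2} : Multiset V)) := by
    rw [show (Finset.univ : Finset (Fin t)) = s1 ∪ s2 ∪ s3 from hunion.symm,
      Finset.sum_union d123, Finset.sum_union d12, hS1, hS2, hS3]
  refine ⟨S, ?_, ?_⟩
  · rw [Multiset.le_iff_count]
    intro v
    rw [hsplit]
    rcases vcases4 v with h | h | h | h <;> subst h <;>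
      simp +decide [Multiset.count_add, Multiset.count_nsmul, Multiset.count_cons,
        Multiset.count_singleton, Multiset.insert_eq_cons] <;> omega
  · intro i
    rcases vcases (R i) (hR i) with h | h | h
    · simp only [hSdef, dif_pos h]
      split
      · rw [Multiset.sum_singleton, h]
      · rw [h, show ({e2, e3} : Multiset V).sum = e1 by decide]
    · have hp1 : ¬ R i = e1 := by rw [h]; decide
      simp only [hSdef, dif_neg hp1, dif_pos h]
      split
      · rw [Multiset.sum_singleton, h]
      · rw [h, show ({e1, e3} : Multiset V).sum = e2 by decide]
    · have hp1 : ¬ R i = e1 := by rw [h]; decide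
      have hp2 : ¬ R i = e2 := by rw [h]; decide
      simp only [hSdef, dif_neg hp1, dif_neg hp2]
      split
      · rw [Multiset.sum_singleton, h]
      · rw [h, show ({e1, e2} : Multiset V).sum = e3 by decide]

end K2Aux

open K2Aux in
/-- k = 2 case: if `N_G((0,1)) ≤ N_G((1,0)) ≤ N_G((1,1))`, then
the largest `t` such that every sequence of `t` nonzero requests can be served
from `G` equals `N_G((0,1)) + N_G((1,0))`, and this also equals the largest
`t` such that `t` copies of the request `(0,1)` can be served. -/
theorem k_eq_two_fb_equals_fP (G : Multiset (Fin 2 → ZMod 2))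
    (h1 : G.count ![0,1] ≤ G.count ![1,0])
    (h2 : G.count ![1,0] ≤ G.count ![1,1]) :
    IsGreatest
      {t : ℕ | ∀ R : Fin t → (Fin 2 → ZMod 2), (∀ i, R i ≠ 0) →
        ∃ S : Fin t → Multiset (Fin 2 → ZMod 2),
          (∑ i, S i) ≤ G ∧ ∀ i, (S i).sum = R i}
      (G.count ![0,1] + G.count ![1,0]) ∧
    IsGreatest
      {t : ℕ | ∃ S : Fin t → Multiset (Fin 2 → ZMod 2),
        (∑ i, S i) ≤ G ∧ ∀ i, (S i).sum = ![0,1]}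
      (G.count ![0,1] + G.count ![1,0]) := by
  have he2 : (e2 : K2Aux.V) ≠ 0 := by decide
  have hab : G.count e2 ≤ G.count e1 := h1
  have hbc : G.count e1 ≤ G.count e3 := h2
  constructor
  · constructor
    · intro R hR
      exact serve_all G hab hbc rfl R hR
    · intro t htmem
      have := htmem (fun _ => e2) (fun _ => he2)
      exact serve_e2_le G this
  · constructor
    · obtain ⟨S, hS1, hS2⟩ := serve_all G hab hbc rfl (fun _ => e2) (fun _ => he2)
      exact ⟨S, hS1, hS2⟩
    · intro t ht
      exact serve_e2_le G ht
end

section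
/- Let the columns C_1, C_2, ... be i.i.d. uniform on F_2^k, fix a nonzero r ∈ F_2^k, and let T_n = t_rP(C_1,...,C_n) be the maximum number of copies of r servable from the first n columns. Then T_n / n → 1/2 almost surely as n → ∞. -/
/-!
A recovery set summing to `r ≠ 0` either contains `r` or has at least two nonzero members,
which gives `2 t_rP(G) + N_G(0) ≤ |G| + N_G(r)`. Conversely, a coordinate `j` with `r j ≠ 0`
splits `F_2^k` into `2^(k-1)` pairs `{v, v + r}`, each summing to `r`, so `G` serves
`∑ min (N_G(v), N_G(v + r))` copies of `r`. By the strong law of large numbers every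
frequency `N_G(v)/n` tends to `2^(-k)`, and both bounds divided by `n` tend to `1/2`.
-/

open MeasureTheory ProbabilityTheory Filter
open scoped ENNReal

/-- A request sequence `R` can be served from the multiset of columns `G` by
pairwise disjoint recovery sets (disjointness encoded by `∑ i, S i ≤ G`). -/
def Serves {k : ℕ} (G : Multiset (Fin k → ZMod 2)) {t : ℕ}
    (R : Fin t → (Fin k → ZMod 2)) : Prop :=
  ∃ S : Fin t → Multiset (Fin k → ZMod 2), (∑ i, S i) ≤ G ∧ ∀ i, (S i).sum = R i

/-- `t_rP`: maximum number of copies of the request `r` servable from `G`. -/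
noncomputable def tRP {k : ℕ} (G : Multiset (Fin k → ZMod 2)) (r : Fin k → ZMod 2) : ℕ :=
  sSup {t : ℕ | Serves G (fun _ : Fin t => r)}

open Multiset
open scoped Topology

section Combinatorics

variable {k : ℕ} {r : Fin k → ZMod 2}

theorem serves_card_of_sum_le {G : Multiset (Fin k → ZMod 2)}
    (M : Multiset (Multiset (Fin k → ZMod 2))) (hle : M.sum ≤ G) (hM : ∀ s ∈ M, s.sum = r) :
    Serves G (fun _ : Fin (card M) => r) := by
  rw [← length_toList]
  refine ⟨fun i => M.toList.get i, ?_, fun i => hM _ (mem_toList.mp (List.get_mem _ _))⟩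
  rwa [← List.sum_ofFn, List.ofFn_get, ← sum_coe, coe_toList]

theorem serves_sum_min_count (G : Multiset (Fin k → ZMod 2)) {s : Finset (Fin k → ZMod 2)}
    (hs : ∀ v ∈ s, v + r ∉ s) :
    Serves G (fun _ : Fin (∑ v ∈ s, min (G.count v) (G.count (v + r))) => r) := by
  set m := fun v => min (G.count v) (G.count (v + r))
  set M : Multiset (Multiset (Fin k → ZMod 2)) := ∑ v ∈ s, replicate (m v) {v, v + r}
  have hcard : card M = ∑ v ∈ s, m v := by simp [M, card_sum]
  have hcount (w) : count w M.sum
      = (if w + r ∈ s then m (w + r) else 0) + (if w ∈ s then m w else 0) := by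
    have hshift (v : Fin k → ZMod 2) : w = v + r ↔ v = w + r := by
      rw [← sub_eq_iff_eq_add, ZModModule.sub_eq_add, eq_comm]
    simp [M, sum_sum, count_sum', count_cons, count_singleton, hshift, mul_add, mul_ite,
      Finset.sum_add_distrib, eq_comm (a := w)]
  have hle : M.sum ≤ G := by
    refine le_iff_count.mpr fun w => (hcount w).trans_le ?_
    by_cases hw : w ∈ s
    · simp [hw, hs w hw, m]
    · by_cases hwr : w + r ∈ s
      · simp [hw, hwr, m, add_assoc, ZModModule.add_self]
      · simp [hw, hwr]
  have hpairs : ∀ p ∈ M, p.sum = r := by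
    simp only [M, Multiset.mem_sum, mem_replicate]
    rintro _ ⟨v, -, -, rfl⟩
    rw [insert_eq_cons, sum_cons, sum_singleton, ← add_assoc, ZModModule.add_self, zero_add]
  rw [← hcard]
  exact serves_card_of_sum_le M hle hpairs

theorem two_add_count_zero_le_of_sum_eq (hr : r ≠ 0) {S : Multiset (Fin k → ZMod 2)}
    (hS : S.sum = r) : 2 + S.count 0 ≤ card S + S.count r := by
  by_cases hrS : r ∈ S
  · rw [← cons_erase hrS, count_cons_self, count_cons_of_ne hr.symm, card_cons]
    have := count_le_card 0 (S.erase r)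
    omega
  · set T := S.filter (· ≠ 0)
    have hsplit : T + replicate (S.count 0) 0 = S := by
      rw [← filter_eq', ← filter_add_not (· ≠ 0) S]
      simp [T]
    have hT : T.sum = r := by simpa [← hS] using congrArg sum hsplit
    have hTcard : 2 ≤ card T := by
      by_contra! h
      interval_cases hc : card T
      · exact hr (by simp_all [card_eq_zero.mp hc])
      · obtain ⟨x, hx⟩ := card_eq_one.mp hc
        have hxr : x = r := by simpa [hx] using hT
        exact hrS (mem_of_mem_filter (p := (· ≠ 0)) (by simp [T, hx, hxr]))
    have := congrArg card hsplit
    rw [card_add, card_replicate] at this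
    rw [count_eq_zero.mpr hrS]
    omega

theorem Serves.two_mul_add_count_zero_le (hr : r ≠ 0) {G : Multiset (Fin k → ZMod 2)} {t : ℕ}
    (h : Serves G (fun _ : Fin t => r)) : 2 * t + G.count 0 ≤ card G + G.count r := by
  obtain ⟨S, hle, hS⟩ := h
  obtain ⟨U, rfl⟩ := Multiset.le_iff_exists_add.mp hle
  have hsum : ∑ i, (2 + (S i).count 0) ≤ ∑ i, (card (S i) + (S i).count r) :=
    Finset.sum_le_sum fun i _ => two_add_count_zero_le_of_sum_eq hr (hS i)
  simp only [Finset.sum_add_distrib, ← count_sum', ← card_sum, Finset.sum_const,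
    Finset.card_univ, Fintype.card_fin, smul_eq_mul] at hsum
  have := count_le_card 0 U
  simp only [count_add, card_add]
  omega

theorem bddAbove_setOf_serves (hr : r ≠ 0) (G : Multiset (Fin k → ZMod 2)) :
    BddAbove {t : ℕ | Serves G (fun _ : Fin t => r)} :=
  ⟨card G + G.count r, fun t ht => by have := ht.two_mul_add_count_zero_le hr; omega⟩

theorem serves_tRP (hr : r ≠ 0) (G : Multiset (Fin k → ZMod 2)) :
    Serves G (fun _ : Fin (tRP G r) => r) :=
  have hzero : Serves G (fun _ : Fin 0 => r) := ⟨Fin.elim0, by simp, fun i => i.elim0⟩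
  Nat.sSup_mem ⟨0, hzero⟩ (bddAbove_setOf_serves hr G)

theorem two_mul_tRP_add_count_zero_le (hr : r ≠ 0) (G : Multiset (Fin k → ZMod 2)) :
    2 * tRP G r + G.count 0 ≤ card G + G.count r :=
  (serves_tRP hr G).two_mul_add_count_zero_le hr

theorem sum_min_count_le_tRP (hr : r ≠ 0) (G : Multiset (Fin k → ZMod 2))
    {s : Finset (Fin k → ZMod 2)} (hs : ∀ v ∈ s, v + r ∉ s) :
    ∑ v ∈ s, min (G.count v) (G.count (v + r)) ≤ tRP G r :=
  le_csSup (bddAbove_setOf_serves hr G) (serves_sum_min_count G hs)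

theorem exists_finset_add_notMem_two_mul_card (hr : r ≠ 0) :
    ∃ s : Finset (Fin k → ZMod 2), (∀ v ∈ s, v + r ∉ s) ∧ 2 * s.card = 2 ^ k := by
  obtain ⟨j, hj⟩ := Function.ne_iff.mp hr
  have hunits : ∀ a b : ZMod 2, a ≠ 0 → b ≠ 0 → a + b = 0 := by decide
  set s := Finset.univ.filter fun v : Fin k → ZMod 2 => v j = 0
  have hcompl : s.card = sᶜ.card := by
    refine Finset.card_bij' (fun v _ => v + r) (fun v _ => v + r) ?_ ?_ ?_ ?_ <;>
      intro v hv <;> simp_all [s, add_assoc, ZModModule.add_self]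
  refine ⟨s, fun v hv => by simp_all [s], ?_⟩
  rw [two_mul]
  nth_rw 2 [hcompl]
  rw [Finset.card_add_card_compl]
  simp

end Combinatorics

theorem tendsto_tRP_div_of_tendsto_count_div {k : ℕ} {r : Fin k → ZMod 2} (hr : r ≠ 0)
    (G : ℕ → Multiset (Fin k → ZMod 2)) (hcard : ∀ n, card (G n) = n)
    (hfreq : ∀ v, Tendsto (fun n => ((G n).count v : ℝ) / n) atTop (𝓝 (2 ^ k)⁻¹)) :
    Tendsto (fun n => (tRP (G n) r : ℝ) / n) atTop (𝓝 (1 / 2)) := by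
  obtain ⟨s, hs, hs_card⟩ := exists_finset_add_notMem_two_mul_card hr
  set f : ℕ → (Fin k → ZMod 2) → ℝ := fun n v => ((G n).count v : ℝ) / n
  have hlower : Tendsto (fun n => ∑ v ∈ s, min (f n v) (f n (v + r))) atTop (𝓝 (1 / 2)) := by
    convert tendsto_finsetSum s fun v _ => (hfreq v).min (hfreq (v + r)) using 2
    have hs_card' : (2 : ℝ) * s.card = 2 ^ k := by exact_mod_cast hs_card
    rw [Finset.sum_const, min_self, nsmul_eq_mul, eq_mul_inv_iff_mul_eq₀ (by positivity)]
    linarith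
  have hupper : Tendsto (fun n => (1 + f n r - f n 0) / 2) atTop (𝓝 (1 / 2)) := by
    convert ((tendsto_const_nhds (x := (1 : ℝ))).add (hfreq r)).sub (hfreq 0) |>.div_const 2
      using 2
    ring
  refine tendsto_of_tendsto_of_tendsto_of_le_of_le' hlower hupper ?_ ?_ <;>
    filter_upwards [eventually_gt_atTop 0] with n hn
  · have hle := sum_min_count_le_tRP hr (G n) hs
    calc ∑ v ∈ s, min (f n v) (f n (v + r))
        = ((∑ v ∈ s, min ((G n).count v) ((G n).count (v + r)) : ℕ) : ℝ) / n := by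
          simp [f, min_div_div_right, Finset.sum_div]
      _ ≤ (tRP (G n) r : ℝ) / n := by gcongr
  · have hle := two_mul_tRP_add_count_zero_le hr (G n)
    rw [hcard] at hle
    have hn' : (0 : ℝ) < n := by exact_mod_cast hn
    simp only [f]
    rw [div_le_iff₀ hn']
    field_simp
    have : (2 * tRP (G n) r + (G n).count 0 : ℝ) ≤ n + (G n).count r := by exact_mod_cast hle
    linarith

theorem count_coe_ofFn {α : Type*} [DecidableEq α] {n : ℕ} (f : Fin n → α) (a : α) :
    count a (List.ofFn f : Multiset α) = ∑ i, if a = f i then 1 else 0 := by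
  rw [← sum_map_singleton (List.ofFn f : Multiset α), map_coe, List.map_ofFn, sum_coe,
    List.sum_ofFn, count_sum']
  simp [count_singleton]

theorem ae_tendsto_count_ofFn_div {α Ω : Type*} [MeasurableSpace α] [MeasurableSingletonClass α]
    [DecidableEq α] [MeasurableSpace Ω] {μ : Measure Ω} [IsFiniteMeasure μ] (X : ℕ → Ω → α)
    (hmeas : ∀ i, Measurable (X i)) (hindep : Pairwise fun i j => IndepFun (X i) (X j) μ)
    (hident : ∀ i, IdentDistrib (X i) (X 0) μ μ) (a : α) :
    ∀ᵐ ω ∂μ, Tendsto (fun n : ℕ => (count a (List.ofFn fun i : Fin n => X i ω) : ℝ) / n)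
      atTop (𝓝 (μ.real (X 0 ⁻¹' {a}))) := by
  have hind : Measurable (({a} : Set α).indicator (1 : α → ℝ)) :=
    measurable_one.indicator (measurableSet_singleton a)
  have hlaw := strong_law_ae_real (fun i => ({a} : Set α).indicator 1 ∘ X i)
    ((integrable_const (1 : ℝ)).indicator (hmeas 0 (measurableSet_singleton a)))
    (fun i j hij => (hindep hij).comp hind hind) (fun i => (hident i).comp hind)
  have hmean : ∫ ω, (({a} : Set α).indicator 1 ∘ X 0) ω ∂μ = μ.real (X 0 ⁻¹' {a}) :=
    integral_indicator_one (hmeas 0 (measurableSet_singleton a))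
  rw [hmean] at hlaw
  filter_upwards [hlaw] with ω hω
  convert hω using 3 with n
  rw [count_coe_ofFn, ← Fin.sum_univ_eq_sum_range]
  push_cast
  simp only [Function.comp_apply, Set.indicator_apply, Set.mem_singleton_iff, Pi.one_apply, eq_comm]

/-- if the columns `C 0, C 1, …` are i.i.d. uniform on `F_2^k` and
`r ≠ 0` is fixed, then `T_n/n → 1/2` almost surely, where `T_n` is the maximum
number of copies of `r` servable from the first `n` columns. -/
theorem tRP_div_n_tendsto_one_half (k : ℕ) (r : Fin k → ZMod 2) (hr : r ≠ 0)
    {Ω : Type*} [MeasureSpace Ω] [IsProbabilityMeasure (ℙ : Measure Ω)]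
    (C : ℕ → Ω → (Fin k → ZMod 2))
    (hmeas : ∀ i, Measurable (C i))
    (hindep : iIndepFun C ℙ)
    (hunif : ∀ i (v : Fin k → ZMod 2), ℙ {ω | C i ω = v} = ((2 : ℝ≥0∞) ^ k)⁻¹) :
    ∀ᵐ ω ∂ℙ, Tendsto
      (fun n : ℕ =>
        (tRP ((List.ofFn fun i : Fin n => C (i : ℕ) ω : List (Fin k → ZMod 2)) :
            Multiset (Fin k → ZMod 2)) r : ℝ) / n)
      atTop (nhds (1 / 2)) := by
  have hident (i : ℕ) : IdentDistrib (C i) (C 0) ℙ ℙ :=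
    ⟨(hmeas i).aemeasurable, (hmeas 0).aemeasurable, Measure.ext_of_singleton fun v => by
      rw [Measure.map_apply (hmeas i) (measurableSet_singleton v),
        Measure.map_apply (hmeas 0) (measurableSet_singleton v)]
      exact (hunif i v).trans (hunif 0 v).symm⟩
  have hprob (v : Fin k → ZMod 2) : (ℙ : Measure Ω).real (C 0 ⁻¹' {v}) = (2 ^ k)⁻¹ := by
    simp [measureReal_def, Set.preimage, hunif 0 v, ENNReal.toReal_inv]
  have hfreq := ae_all_iff.mpr fun v =>
    ae_tendsto_count_ofFn_div C hmeas (fun i j hij => hindep.indepFun hij) hident v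
  filter_upwards [hfreq] with ω hω
  exact tendsto_tRP_div_of_tendsto_count_div hr _ (fun n => by simp)
    fun v => by simpa only [hprob] using hω v
end

section
/- Let columns C_1, C_2, ... be i.i.d. uniform on F_2^k and requests R_1, R_2, ... be i.i.d. uniform on F_2^k \ {0}, with the two processes independent. Let V_n be the largest V such that the requests R_1, ..., R_V can be served from the columns C_1, ..., C_n by pairwise disjoint recovery sets. Then V_n / n → 1 − 2^{-k} almost surely. -/
/-!
Every recovery set of a nonzero request contains a nonzero column, so at most
`n - #{i < n | C i = 0} ≈ (1 - 2⁻ᵏ) n` requests can be served from `n` columns. Conversely, for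
`a < 1 - 2⁻ᵏ` each nonzero value occurs about `a n / (2ᵏ - 1) < n / 2ᵏ` times among the first
`⌈a n⌉` requests, hence less often than among the first `n` columns, and those requests are served
by singletons. All empirical frequencies converge almost surely by the strong law of large numbers.
-/

open MeasureTheory ProbabilityTheory Filter
open scoped ENNReal

open Topology
open scoped Function

namespace Serves

variable {k t : ℕ} {G : Multiset (Fin k → ZMod 2)} {R : Fin t → Fin k → ZMod 2}

theorem of_ofFn_le (h : ↑(List.ofFn R) ≤ G) : Serves G R := by
  refine ⟨fun i => {R i}, ?_, fun i => Multiset.sum_singleton _⟩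
  have : Finset.univ.val.map (fun i => {R i}) =
      (Finset.univ.val.map R).map ({·} : _ → Multiset _) :=
    (Multiset.map_map _ _ _).symm
  rwa [Finset.sum_eq_multiset_sum, this, Multiset.sum_map_singleton, Fin.univ_val_map]

theorem add_count_zero_le_card (h : Serves G R) (hR : ∀ i, R i ≠ 0) :
    t + G.count 0 ≤ Multiset.card G := by
  obtain ⟨S, hSG, hSR⟩ := h
  have hS : ∀ i, 1 ≤ (S i).countP (fun x => ¬0 = x) := fun i => by
    by_contra! h0
    rw [Nat.lt_one_iff, Multiset.countP_eq_zero] at h0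
    exact hR i (hSR i ▸ Multiset.sum_eq_zero fun x hx => (not_not.1 (h0 x hx)).symm)
  calc t + G.count 0 = ∑ _i : Fin t, 1 + G.count 0 := by simp
    _ ≤ (∑ i, S i).countP (fun x => ¬0 = x) + G.count 0 := by
      rw [← Multiset.coe_countPAddMonoidHom, map_sum]
      gcongr with i
      exact hS i
    _ ≤ G.countP (fun x => ¬0 = x) + G.count 0 :=
      Nat.add_le_add_right (Multiset.countP_le_of_le _ hSG) _
    _ = Multiset.card G := by
      rw [Multiset.card_eq_countP_add_countP (0 = ·), add_comm]
      rfl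

end Serves

section Frequencies

variable {α : Type*}

def seqPrefix (f : ℕ → α) (n : ℕ) : Multiset α :=
  ↑(List.ofFn fun i : Fin n => f i)

@[simp]
theorem card_seqPrefix (f : ℕ → α) (n : ℕ) : Multiset.card (seqPrefix f n) = n := by
  simp [seqPrefix]

variable [DecidableEq α]

theorem count_seqPrefix (f : ℕ → α) (n : ℕ) (w : α) :
    (seqPrefix f n).count w = ∑ i ∈ Finset.range n, if f i = w then 1 else 0 := by
  have : List.ofFn (fun i : Fin n => f i) = (List.range n).map f :=
    List.ext_getElem (by simp) (by simp)
  rw [seqPrefix, this, ← Multiset.map_coe, Multiset.coe_range, Multiset.count_map,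
    Finset.sum_boole]
  simp [eq_comm]
  rfl

noncomputable def empiricalFreq (f : ℕ → α) (w : α) (n : ℕ) : ℝ :=
  (seqPrefix f n).count w / n

theorem tendsto_comp_ceil_mul_div {g : ℕ → ℝ} {q a : ℝ} (ha : 0 < a)
    (hg : Tendsto (fun m : ℕ => g m / m) atTop (𝓝 q)) :
    Tendsto (fun n : ℕ => g ⌈a * n⌉₊ / n) atTop (𝓝 (q * a)) := by
  have hceil : Tendsto (fun n : ℕ => (⌈a * n⌉₊ : ℝ) / n) atTop (𝓝 a) :=
    (tendsto_nat_ceil_mul_div_atTop ha.le).comp tendsto_natCast_atTop_atTop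
  have hceil_top : Tendsto (fun n : ℕ => ⌈a * n⌉₊) atTop atTop :=
    tendsto_nat_ceil_atTop.comp (tendsto_natCast_atTop_atTop.const_mul_atTop ha)
  refine ((hg.comp hceil_top).mul hceil).congr' ?_
  filter_upwards [hceil_top.eventually_ne_atTop 0] with n hn
  simp only [Function.comp_apply]
  field_simp

theorem eventually_seqPrefix_ceil_le [Finite α] {c r : ℕ → α} {p q : α → ℝ} {a : ℝ} (ha : 0 < a)
    (hc : ∀ w, Tendsto (empiricalFreq c w) atTop (𝓝 (p w)))
    (hr : ∀ w, Tendsto (empiricalFreq r w) atTop (𝓝 (q w)))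
    (hqp : ∀ w, q w * a < p w) :
    ∀ᶠ n : ℕ in atTop, seqPrefix r ⌈a * n⌉₊ ≤ seqPrefix c n := by
  simp only [Multiset.le_iff_count, eventually_all]
  intro w
  have hlt := (tendsto_comp_ceil_mul_div ha (hr w)).eventually_lt (hc w) (hqp w)
  filter_upwards [hlt, eventually_gt_atTop 0] with n hn hn0
  have hn0' : (0 : ℝ) < n := by exact_mod_cast hn0
  exact_mod_cast (div_lt_div_iff_of_pos_right hn0').1 hn |>.le

end Frequencies

section SLLN

variable {Ω α : Type*} {mΩ : MeasurableSpace Ω} {μ : Measure Ω}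
  [MeasurableSpace α] [MeasurableSingletonClass α]

theorem identDistrib_of_measure_eq_singleton [Countable α] {X Y : Ω → α}
    (hX : Measurable X) (hY : Measurable Y) (h : ∀ w, μ {ω | X ω = w} = μ {ω | Y ω = w}) :
    IdentDistrib X Y μ μ := by
  refine ⟨hX.aemeasurable, hY.aemeasurable, Measure.ext_of_singleton fun w => ?_⟩
  rw [Measure.map_apply hX (measurableSet_singleton w),
    Measure.map_apply hY (measurableSet_singleton w)]
  exact h w

theorem ae_tendsto_empiricalFreq [IsProbabilityMeasure μ] [DecidableEq α] {X : ℕ → Ω → α}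
    (hX : ∀ i, Measurable (X i)) (hindep : Pairwise ((IndepFun · · μ) on X))
    (hident : ∀ i, IdentDistrib (X i) (X 0) μ μ) (w : α) :
    ∀ᵐ ω ∂μ, Tendsto (empiricalFreq (X · ω) w) atTop (𝓝 (μ.real {ω | X 0 ω = w})) := by
  let φ : α → ℝ := fun x => if x = w then 1 else 0
  have hφ : Measurable φ :=
    Measurable.ite (measurableSet_singleton w) measurable_const measurable_const
  have hφX : ∀ i, φ ∘ X i = {ω | X i ω = w}.indicator 1 := fun i => by
    ext ω
    simp [φ, Set.indicator_apply]
  have hmeas : MeasurableSet {ω | X 0 ω = w} := hX 0 (measurableSet_singleton w)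
  have hint : Integrable (φ ∘ X 0) μ := by
    rw [hφX]
    exact (integrable_const 1).indicator hmeas
  have hmean : μ[φ ∘ X 0] = μ.real {ω | X 0 ω = w} := by
    rw [hφX, integral_indicator_one hmeas]
  filter_upwards [strong_law_ae (fun i => φ ∘ X i) hint
    (fun i j hij => (hindep hij).comp hφ hφ) (fun i => (hident i).comp hφ)] with ω hω
  rw [hmean] at hω
  refine hω.congr fun n => ?_
  simp only [empiricalFreq, count_seqPrefix, Function.comp_apply, φ, smul_eq_mul, div_eq_inv_mul]
  push_cast
  rfl

end SLLN

section MaxServed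

variable {k : ℕ} (c r : ℕ → Fin k → ZMod 2)

noncomputable def maxServed (n : ℕ) : ℕ :=
  sSup {v | Serves (seqPrefix c n) (fun i : Fin v => r i)}

variable {c r}

theorem bddAbove_setOf_serves_s16 (hr : ∀ i, r i ≠ 0) (n : ℕ) :
    BddAbove {v | Serves (seqPrefix c n) (fun i : Fin v => r i)} :=
  ⟨n, fun v hv => by simpa using (hv.add_count_zero_le_card fun i => hr i).trans' le_self_add⟩

theorem le_maxServed (hr : ∀ i, r i ≠ 0) {v n : ℕ} (h : seqPrefix r v ≤ seqPrefix c n) :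
    v ≤ maxServed c r n :=
  le_csSup (bddAbove_setOf_serves_s16 hr n) (Serves.of_ofFn_le h)

theorem maxServed_add_count_zero_le (hr : ∀ i, r i ≠ 0) (n : ℕ) :
    maxServed c r n + (seqPrefix c n).count 0 ≤ n := by
  have hmem : maxServed c r n ∈ {v | Serves (seqPrefix c n) (fun i : Fin v => r i)} :=
    Nat.sSup_mem ⟨0, Serves.of_ofFn_le (by simp)⟩ (bddAbove_setOf_serves_s16 hr n)
  simpa using hmem.add_count_zero_le_card fun i => hr i

theorem maxServed_div_le (hr : ∀ i, r i ≠ 0) (n : ℕ) :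
    (maxServed c r n : ℝ) / n ≤ 1 - empiricalFreq c 0 n := by
  rcases n.eq_zero_or_pos with rfl | hn
  · simp [empiricalFreq]
  have hn' : (0 : ℝ) < n := by exact_mod_cast hn
  rw [empiricalFreq, le_sub_iff_add_le, ← add_div, div_le_one hn']
  exact_mod_cast maxServed_add_count_zero_le hr n

theorem eventually_le_maxServed_div (hr : ∀ i, r i ≠ 0) {p q : (Fin k → ZMod 2) → ℝ} {a : ℝ}
    (ha : 0 < a) (hcp : ∀ w, Tendsto (empiricalFreq c w) atTop (𝓝 (p w)))
    (hrq : ∀ w, Tendsto (empiricalFreq r w) atTop (𝓝 (q w))) (hqp : ∀ w, q w * a < p w) :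
    ∀ᶠ n : ℕ in atTop, a ≤ (maxServed c r n : ℝ) / n := by
  filter_upwards [eventually_seqPrefix_ceil_le ha hcp hrq hqp, eventually_gt_atTop 0]
    with n hle hn
  rw [le_div_iff₀ (by exact_mod_cast hn)]
  exact (Nat.le_ceil _).trans (by exact_mod_cast le_maxServed hr hle)

theorem tendsto_maxServed_div (hr0 : ∀ i, r i ≠ 0)
    (hc : ∀ w, Tendsto (empiricalFreq c w) atTop (𝓝 ((2 : ℝ) ^ k)⁻¹))
    (hr : ∀ w, w ≠ 0 → Tendsto (empiricalFreq r w) atTop (𝓝 ((2 : ℝ) ^ k - 1)⁻¹)) :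
    Tendsto (fun n : ℕ => (maxServed c r n : ℝ) / n) atTop (𝓝 (1 - 1 / 2 ^ k)) := by
  have hk : k ≠ 0 := by
    rintro rfl
    exact hr0 0 (Subsingleton.elim _ _)
  have h2k : (1 : ℝ) < 2 ^ k := one_lt_pow₀ one_lt_two hk
  refine tendsto_order.2 ⟨fun b hb => ?_, fun b hb => ?_⟩
  · have hL : (0 : ℝ) < 1 - 1 / 2 ^ k := by
      rw [sub_pos, div_lt_one (by positivity)]
      exact h2k
    obtain ⟨a, hba, haL⟩ := exists_between (max_lt hb hL)
    obtain ⟨hba, ha⟩ := max_lt_iff.1 hba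
    let q : (Fin k → ZMod 2) → ℝ := fun w => if w = 0 then 0 else ((2 : ℝ) ^ k - 1)⁻¹
    have hrq : ∀ w, Tendsto (empiricalFreq r w) atTop (𝓝 (q w)) := fun w => by
      by_cases hw : w = 0
      · simp only [q, if_pos hw]
        refine tendsto_const_nhds.congr fun n => ?_
        simp [hw, empiricalFreq, count_seqPrefix, hr0]
      · simpa [q, hw] using hr w hw
    have hqp : ∀ w, q w * a < ((2 : ℝ) ^ k)⁻¹ := fun w => by
      by_cases hw : w = 0
      · simp [q, hw]
      · simp only [q, hw, if_false]
        rw [inv_mul_lt_iff₀ (by linarith)]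
        convert haL using 1
        field_simp
    filter_upwards [eventually_le_maxServed_div hr0 ha hc hrq hqp] with n hn
    exact hba.trans_le hn
  · rw [one_div] at hb
    filter_upwards [(tendsto_const_nhds.sub (hc 0)).eventually_lt_const hb] with n hn
    exact (maxServed_div_le hr0 n).trans_lt hn

end MaxServed

/-- columns i.i.d. uniform on `F_2^k`, requests i.i.d. uniform on
`F_2^k \ {0}`, the two processes independent (joint independence of the family
`Sum.elim C R`). Then `V_n / n → 1 − 2^{-k}` almost surely, where `V_n` is the
largest `v` such that the first `v` requests can be served from the first `n`
columns. -/
theorem servable_prefix_div_n_tendsto (k : ℕ)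
    {Ω : Type*} [MeasureSpace Ω] [IsProbabilityMeasure (ℙ : Measure Ω)]
    (C : ℕ → Ω → (Fin k → ZMod 2)) (R : ℕ → Ω → (Fin k → ZMod 2))
    (hmC : ∀ i, Measurable (C i)) (hmR : ∀ i, Measurable (R i))
    (hindep : iIndepFun (Sum.elim C R) ℙ)
    (hunifC : ∀ i (v : Fin k → ZMod 2), ℙ {ω | C i ω = v} = ((2 : ℝ≥0∞) ^ k)⁻¹)
    (hR0 : ∀ i ω, R i ω ≠ 0)
    (hunifR : ∀ i (v : Fin k → ZMod 2), v ≠ 0 →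
      ℙ {ω | R i ω = v} = ((2 : ℝ≥0∞) ^ k - 1)⁻¹) :
    ∀ᵐ ω ∂ℙ, Tendsto
      (fun n : ℕ =>
        ((sSup {v : ℕ |
            Serves ((List.ofFn fun i : Fin n => C (i : ℕ) ω : List (Fin k → ZMod 2)) :
                Multiset (Fin k → ZMod 2))
              (fun i : Fin v => R (i : ℕ) ω)} : ℕ) : ℝ) / n)
      atTop (nhds (1 - 1 / 2 ^ k)) := by
  have hC : ∀ w, ∀ᵐ ω, Tendsto (empiricalFreq (C · ω) w) atTop (𝓝 ((2 : ℝ) ^ k)⁻¹) := by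
    intro w
    have := ae_tendsto_empiricalFreq hmC
      (fun i j hij => (hindep.precomp Sum.inl_injective).indepFun hij)
      (fun i => identDistrib_of_measure_eq_singleton (hmC i) (hmC 0) fun v => by
        rw [hunifC, hunifC]) w
    simpa [measureReal_def, hunifC] using this
  have hRnull : ∀ i, {ω | R i ω = 0} = ∅ := fun i =>
    Set.eq_empty_iff_forall_notMem.2 (hR0 i)
  have hR : ∀ w, ∀ᵐ ω, w ≠ 0 →
      Tendsto (empiricalFreq (R · ω) w) atTop (𝓝 ((2 : ℝ) ^ k - 1)⁻¹) := by
    intro w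
    have := ae_tendsto_empiricalFreq hmR
      (fun i j hij => (hindep.precomp Sum.inr_injective).indepFun hij)
      (fun i => identDistrib_of_measure_eq_singleton (hmR i) (hmR 0) fun v => by
        obtain rfl | hv := eq_or_ne v 0
        · rw [hRnull, hRnull]
        · rw [hunifR i v hv, hunifR 0 v hv]) w
    filter_upwards [this] with ω hω hw
    rwa [measureReal_def, hunifR 0 w hw, ENNReal.toReal_inv,
      ENNReal.toReal_sub_of_le (one_le_pow₀ one_le_two) (by simp)] at hω
  filter_upwards [ae_all_iff.2 hC, ae_all_iff.2 hR] with ω hCω hRω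
  exact tendsto_maxServed_div (c := (C · ω)) (r := (R · ω)) (hR0 · ω) hCω hRω
end
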